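/- arXiv:2508.07060 — 9 statements merged into one kernel-verified Lean document; each statement's English description precedes it below -/
import Mathlib

section
/- Let F be a subfield of ℝ, and let a, b, c, d ∈ F with a ≤ c < d ≤ b. Then the polynomial (x−c)(x−d) lies in the preordering T generated by (x−a)(x−b), i.e., (x−c)(x−d) = σ₀ + σ₁·(x−a)(x−b) for some σ₀, σ₁ ∈ ∑ F_{≥0} F[x]². -/
set_option maxHeartbeats 1600000
set_option synthInstance.maxHeartbeats 400000

open Polynomial

noncomputable def pev (F : Subfield ℝ) (f : F[X]) (x : ℝ) : ℝ := Polynomial.aeval x f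

/-- `σ` is a finite sum of terms `t·g²` with `t ∈ F`, `t ≥ 0`, `g ∈ F[x]`. -/
def SumWtSq (F : Subfield ℝ) (σ : F[X]) : Prop :=
  ∃ (n : ℕ) (t : Fin n → F) (g : Fin n → F[X]),
    (∀ i, (0:ℝ) ≤ (t i : ℝ)) ∧ σ = ∑ i, C (t i) * g i ^ 2

theorem stmt1 (F : Subfield ℝ) (a b c d : F)
    (hac : (a:ℝ) ≤ (c:ℝ)) (hcd : (c:ℝ) < (d:ℝ)) (hdb : (d:ℝ) ≤ (b:ℝ)) :
    ∃ σ₀ σ₁ : F[X], SumWtSq F σ₀ ∧ SumWtSq F σ₁ ∧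
      (X - C c) * (X - C d) = σ₀ + σ₁ * ((X - C a) * (X - C b)) := by
  have hab : (a:ℝ) < (b:ℝ) := by linarith
  have hsR : (0:ℝ) < ((b - a : F) : ℝ) := by push_cast; linarith
  have hsne : (b - a : F) ≠ 0 := by
    intro h; rw [h] at hsR; norm_num at hsR
  set t : F := (d - c) / (b - a) with ht
  set u : F := (c - a) + (b - d) with hu
  set B : F := (c + d) - t * (a + b) with hB
  set w : F := 1 / (4 * u * (b - a)) with hw
  set k : F := (c - a) * (b - d) * (d - c) / u with hk
  have huR : (0:ℝ) ≤ (u : ℝ) := by push_cast [hu]; linarith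
  have hdeg : u = 0 → c = a ∧ b = d := by
    intro h0
    have h0' := congrArg (fun x : F => (x:ℝ)) h0
    push_cast [hu] at h0'
    constructor <;> (apply Subtype.coe_injective; dsimp) <;> linarith
  have hdane : (d - a : F) ≠ 0 := by
    intro h
    have := congrArg (fun x : F => (x:ℝ)) h
    push_cast at this; linarith
  -- scalar identities
  have h1 : w * (2*u)^2 + t = 1 := by
    rcases eq_or_ne u 0 with h0 | h0
    · obtain ⟨hca, hbd⟩ := hdeg h0
      rw [h0, ht, hca, hbd]
      simp [div_self hdane]
    · rw [hw, ht]; field_simp; ring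
  have h2 : 4*u*w*(B*(b-a)) + t*(a+b) = c + d := by
    rcases eq_or_ne u 0 with h0 | h0
    · obtain ⟨hca, hbd⟩ := hdeg h0
      rw [h0, ht, hca, hbd]
      simp [div_self hdane]
    · rw [hw]; field_simp; ring
  have h3 : w*(B*(b-a))^2 + k + t*(a*b) = c*d := by
    rcases eq_or_ne u 0 with h0 | h0
    · obtain ⟨hca, hbd⟩ := hdeg h0
      rw [hw, hk, hB, ht, h0, hca, hbd]
      simp [div_self hdane]
    · rw [hw, hk, hB, ht]; field_simp; ring
  refine ⟨C w * (C (2*u) * X - C (B*(b-a)))^2 + C k * 1^2, C t * 1^2, ?_, ?_, ?_⟩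
  · refine ⟨2, ![w, k], ![C (2*u) * X - C (B*(b-a)), 1], ?_, ?_⟩
    · intro i
      fin_cases i
      · show (0:ℝ) ≤ ((w : F) : ℝ)
        rw [hw]; push_cast
        apply one_div_nonneg.mpr
        have h5 : (0:ℝ) ≤ (b:ℝ) - (a:ℝ) := by linarith
        apply mul_nonneg (mul_nonneg ?_ huR) h5
        exact_mod_cast (by norm_num : (0:ℝ) ≤ 4)
      · show (0:ℝ) ≤ ((k : F) : ℝ)
        rw [hk]; push_cast
        apply div_nonneg _ huR
        have h4 : (0:ℝ) ≤ (c:ℝ) - a := by linarith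
        have h5 : (0:ℝ) ≤ (b:ℝ) - d := by linarith
        have h6 : (0:ℝ) ≤ (d:ℝ) - c := by linarith
        positivity
    · simp [Fin.sum_univ_two]
  · refine ⟨1, ![t], ![1], ?_, ?_⟩
    · intro i
      fin_cases i
      show (0:ℝ) ≤ ((t : F) : ℝ)
      rw [ht]; push_cast
      apply div_nonneg <;> linarith
    · simp
  · have hc1 : (C (w * (2*u)^2 + t) : F[X]) = C 1 := by rw [h1]
    have hc2 : (C (4*u*w*(B*(b-a)) + t*(a+b)) : F[X]) = C (c + d) := by rw [h2]
    have hc3 : (C (w*(B*(b-a))^2 + k + t*(a*b)) : F[X]) = C (c*d) := by rw [h3]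
    simp only [map_add, map_sub, map_mul, map_pow, map_one, map_ofNat] at hc1 hc2 hc3 ⊢
    linear_combination (-X^2 : F[X]) * hc1 + X * hc2 - hc3
end

section
/- Let F be a subfield of ℝ and a, b ∈ F with a < b. If f ∈ F[x] satisfies f(x) ≥ 0 for all x ∈ [a,b], then f = σ₀ + (x−a)σ₁ + (b−x)σ₂ + (x−a)(b−x)σ₃ with each σᵢ a finite sum of terms t·g², t ∈ F_{≥0}, g ∈ F[x]. -/
open Polynomial

/-!
Induction on the degree of `f`. If `f` vanishes somewhere on `[a, b]`, split off a factor: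
`X - a` or `b - X` for a zero at an endpoint, and the square of the minimal polynomial of `r`
over `F` for an interior zero `r`, which is a local minimum of `f` and hence a double zero
(minimal polynomials are separable in characteristic zero). The factor is nonnegative on
`[a, b]`, so by continuity the quotient is too, and it has smaller degree.

If `f > 0` on `[a, b]`, rescale `[a, b]` to `[0, 1]`. The degree-`N` Bernstein coefficients
of a polynomial are within `O(1/N)` of its values at `k / N`, so for large `N` they are all
positive, and each rescaled Bernstein term `t (x - a)^k (b - x)^(N - k)` visibly lies in the
preordering.
-/

open Finset

section Preordering

variable {F : Subfield ℝ}

theorem sumWtSq_zero : SumWtSq F 0 := ⟨0, ![], ![], nofun, by simp⟩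

theorem sumWtSq_C_mul_sq {t : F} (ht : (0 : ℝ) ≤ t) (g : F[X]) : SumWtSq F (C t * g ^ 2) :=
  ⟨1, ![t], ![g], fun _ => by simpa using ht, by simp⟩

theorem SumWtSq.add {σ τ : F[X]} (hσ : SumWtSq F σ) (hτ : SumWtSq F τ) : SumWtSq F (σ + τ) := by
  obtain ⟨n, t, g, ht, rfl⟩ := hσ
  obtain ⟨m, s, h, hs, rfl⟩ := hτ
  exact ⟨n + m, Fin.append t s, Fin.append g h, Fin.addCases (by simpa) (by simpa),
    by simp [Fin.sum_univ_add]⟩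

theorem SumWtSq.sq_mul {σ : F[X]} (hσ : SumWtSq F σ) (h : F[X]) : SumWtSq F (h ^ 2 * σ) := by
  obtain ⟨n, t, g, ht, rfl⟩ := hσ
  exact ⟨n, t, fun i => h * g i, ht, by simp only [mul_sum, mul_pow, mul_left_comm]⟩

/-- Membership in the preordering of `F[X]` generated by `X - a` and `b - X`. -/
def MemPreordering (F : Subfield ℝ) (a b : F) (f : F[X]) : Prop :=
  ∃ σ₀ σ₁ σ₂ σ₃ : F[X], SumWtSq F σ₀ ∧ SumWtSq F σ₁ ∧ SumWtSq F σ₂ ∧ SumWtSq F σ₃ ∧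
    f = σ₀ + (X - C a) * σ₁ + (C b - X) * σ₂ + (X - C a) * (C b - X) * σ₃

variable {a b : F}

theorem memPreordering_of_sumWtSq {f : F[X]} (hf : SumWtSq F f) : MemPreordering F a b f :=
  ⟨f, 0, 0, 0, hf, sumWtSq_zero, sumWtSq_zero, sumWtSq_zero, by ring⟩

theorem MemPreordering.add {f g : F[X]} (hf : MemPreordering F a b f)
    (hg : MemPreordering F a b g) : MemPreordering F a b (f + g) := by
  obtain ⟨s₀, s₁, s₂, s₃, h₀, h₁, h₂, h₃, rfl⟩ := hf
  obtain ⟨r₀, r₁, r₂, r₃, k₀, k₁, k₂, k₃, rfl⟩ := hg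
  exact ⟨s₀ + r₀, s₁ + r₁, s₂ + r₂, s₃ + r₃, h₀.add k₀, h₁.add k₁, h₂.add k₂, h₃.add k₃, by ring⟩

theorem memPreordering_sum {ι : Type*} (s : Finset ι) {f : ι → F[X]}
    (hf : ∀ i ∈ s, MemPreordering F a b (f i)) : MemPreordering F a b (∑ i ∈ s, f i) := by
  classical
  induction s using Finset.induction_on with
  | empty => exact memPreordering_of_sumWtSq sumWtSq_zero
  | insert i s hi ih =>
    rw [sum_insert hi]
    exact (hf i (mem_insert_self i s)).add (ih fun j hj => hf j (mem_insert_of_mem hj))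

theorem MemPreordering.sq_mul {f : F[X]} (hf : MemPreordering F a b f) (h : F[X]) :
    MemPreordering F a b (h ^ 2 * f) := by
  obtain ⟨s₀, s₁, s₂, s₃, h₀, h₁, h₂, h₃, rfl⟩ := hf
  exact ⟨h ^ 2 * s₀, h ^ 2 * s₁, h ^ 2 * s₂, h ^ 2 * s₃, h₀.sq_mul h, h₁.sq_mul h, h₂.sq_mul h,
    h₃.sq_mul h, by ring⟩

theorem MemPreordering.X_sub_C_mul {f : F[X]} (hf : MemPreordering F a b f) :
    MemPreordering F a b ((X - C a) * f) := by
  obtain ⟨s₀, s₁, s₂, s₃, h₀, h₁, h₂, h₃, rfl⟩ := hf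
  exact ⟨(X - C a) ^ 2 * s₁, s₀, (X - C a) ^ 2 * s₃, s₂, h₁.sq_mul _, h₀, h₃.sq_mul _, h₂,
    by ring⟩

theorem MemPreordering.C_sub_X_mul {f : F[X]} (hf : MemPreordering F a b f) :
    MemPreordering F a b ((C b - X) * f) := by
  obtain ⟨s₀, s₁, s₂, s₃, h₀, h₁, h₂, h₃, rfl⟩ := hf
  exact ⟨(C b - X) ^ 2 * s₂, (C b - X) ^ 2 * s₃, s₀, s₁, h₂.sq_mul _, h₃.sq_mul _, h₀, h₁,
    by ring⟩

theorem memPreordering_C_mul_pow_mul_pow {t : F} (ht : (0 : ℝ) ≤ t) (k m : ℕ) :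
    MemPreordering F a b (C t * (X - C a) ^ k * (C b - X) ^ m) := by
  have ht' : MemPreordering F a b (C t * 1 ^ 2) := memPreordering_of_sumWtSq (sumWtSq_C_mul_sq ht 1)
  have hm : MemPreordering F a b ((C b - X) ^ m * (C t * 1 ^ 2)) := by
    induction m with
    | zero => simpa using ht'
    | succ m ih => simpa only [pow_succ', mul_assoc] using ih.C_sub_X_mul
  have hkm : MemPreordering F a b ((X - C a) ^ k * ((C b - X) ^ m * (C t * 1 ^ 2))) := by
    induction k with
    | zero => simpa using hm
    | succ k ih => simpa only [pow_succ', mul_assoc] using ih.X_sub_C_mul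
  convert hkm using 1
  ring

end Preordering

section RealRoots

theorem nonneg_on_Icc_of_nonneg_off_finite {g : ℝ → ℝ} (hg : Continuous g) {a b : ℝ}
    (hab : a < b) {S : Set ℝ} (hS : S.Finite) (h : ∀ x ∈ Set.Ioo a b, x ∉ S → 0 ≤ g x) :
    ∀ x ∈ Set.Icc a b, 0 ≤ g x := by
  have hdense : Set.Icc a b ⊆ closure (Set.Ioo a b ∩ Sᶜ) := by
    rw [← closure_Ioo hab.ne]
    exact closure_minimal ((hS.countable.dense_compl ℝ).open_subset_closure_inter isOpen_Ioo)
      isClosed_closure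
  exact fun x hx => closure_minimal (fun y hy => h y hy.1 hy.2)
    (isClosed_le continuous_const hg) (hdense hx)

variable {K : Type*} [Field K] [Algebra K ℝ]

theorem nonneg_of_nonneg_mul {a b : ℝ} (hab : a < b) {p q : K[X]} (hp0 : p ≠ 0)
    (hp : ∀ x ∈ Set.Icc a b, 0 ≤ aeval x p) (hpq : ∀ x ∈ Set.Icc a b, 0 ≤ aeval x (p * q)) :
    ∀ x ∈ Set.Icc a b, 0 ≤ aeval x q := by
  refine nonneg_on_Icc_of_nonneg_off_finite q.continuous_aeval hab
    (finite_setOfPred_isRoot (map_ne_zero (f := algebraMap K ℝ) hp0)) fun x hx hroot => ?_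
  have hx' := Set.Ioo_subset_Icc_self hx
  have hpx : 0 < aeval x p :=
    (hp x hx').lt_of_ne' (by simpa [IsRoot, eval_map_algebraMap] using hroot)
  exact nonneg_of_mul_nonneg_right (by simpa using hpq x hx') hpx

theorem minpoly_sq_dvd_of_isLocalMin [CharZero K] {f : K[X]} (hf : f ≠ 0) {r : ℝ}
    (hr : aeval r f = 0) (hmin : IsLocalMin (fun x => aeval x f) r) : minpoly K r ^ 2 ∣ f := by
  have hint : IsIntegral K r := IsAlgebraic.isIntegral ⟨f, hf, hr⟩
  obtain ⟨q, rfl⟩ := minpoly.dvd K r hr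
  have hderiv : aeval r (derivative (minpoly K r * q)) = 0 :=
    hmin.hasDerivAt_eq_zero (Polynomial.hasDerivAt_aeval _ r)
  have hsep : aeval r (derivative (minpoly K r)) ≠ 0 :=
    (minpoly.irreducible hint).separable.aeval_derivative_ne_zero (minpoly.aeval K r)
  rw [derivative_mul, map_add, map_mul, map_mul, minpoly.aeval, zero_mul, add_zero] at hderiv
  rw [pow_two]
  exact mul_dvd_mul_left _ (minpoly.dvd K r ((mul_eq_zero.1 hderiv).resolve_left hsep))

end RealRoots

theorem sub_div_sub_le_div {i k N : ℝ} (hi : 0 ≤ i) (hkN : k ≤ N) (hiN : i < N) :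
    (k - i) / (N - i) ≤ k / N := by
  rw [div_le_div_iff₀ (by linarith) (by linarith)]
  nlinarith

theorem div_sub_sub_div_sub_le {i k N : ℝ} (hi : 0 ≤ i) (hik : i ≤ k) (hiN : i < N) :
    k / N - (k - i) / (N - i) ≤ i / N := by
  have hlow : (k - i) / N ≤ (k - i) / (N - i) :=
    div_le_div_of_nonneg_left (by linarith) (by linarith) (by linarith)
  linarith [show k / N - (k - i) / N = i / N by ring]

theorem prod_sub_prod_le_sum_sub {ι R : Type*} [CommRing R] [LinearOrder R]
    [IsStrictOrderedRing R] (s : Finset ι) {x y : ι → R} (hx : ∀ i ∈ s, 0 ≤ x i)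
    (hxy : ∀ i ∈ s, x i ≤ y i) (hy : ∀ i ∈ s, y i ≤ 1) :
    ∏ i ∈ s, y i - ∏ i ∈ s, x i ≤ ∑ i ∈ s, (y i - x i) := by
  classical
  induction s using Finset.induction_on with
  | empty => simp
  | insert j s hj ih =>
    simp only [forall_mem_insert] at hx hxy hy
    rw [prod_insert hj, prod_insert hj, sum_insert hj]
    have hle := ih hx.2 hxy.2 hy.2
    have hmono : ∏ i ∈ s, x i ≤ ∏ i ∈ s, y i := prod_le_prod hx.2 hxy.2
    have hx1 : ∏ i ∈ s, x i ≤ 1 := prod_le_one hx.2 fun i hi => (hxy.2 i hi).trans (hy.2 i hi)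
    have hx0 : 0 ≤ ∏ i ∈ s, x i := prod_nonneg hx.2
    -- `y P - x Q = y (P - Q) + (y - x) Q` with `y, Q ≤ 1`
    nlinarith [hx.1, hxy.1, hy.1]

theorem cast_choose_div_cast_choose_eq_prod {j k N : ℕ} (hjk : j ≤ k) (hkN : k ≤ N) :
    (k.choose j : ℝ) / N.choose j = ∏ i ∈ range j, ((k : ℝ) - i) / (N - i) := by
  have hdesc : ∀ n, j ≤ n → (j.factorial : ℝ) * n.choose j = ∏ i ∈ range j, ((n : ℝ) - i) := by
    intro n hn
    rw [← Nat.cast_mul, ← Nat.descFactorial_eq_factorial_mul_choose,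
      Nat.descFactorial_eq_prod_range, Nat.cast_prod]
    exact prod_congr rfl fun i hi => Nat.cast_sub (by simp at hi; omega)
  rw [prod_div_distrib, ← hdesc k hjk, ← hdesc N (hjk.trans hkN),
    mul_div_mul_left _ _ (by positivity)]

theorem abs_cast_choose_div_cast_choose_sub_pow_le {j k N : ℕ} (hjN : j ≤ N) (hkN : k ≤ N) :
    |(k.choose j : ℝ) / N.choose j - ((k : ℝ) / N) ^ j| ≤ (j : ℝ) ^ 2 / N := by
  have hkN' : (k : ℝ) ≤ N := by exact_mod_cast hkN
  rcases lt_or_ge k j with hkj | hjk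
  · have hN : (0 : ℝ) < N := by exact_mod_cast (hkj.trans_le hjN).trans_le' (Nat.zero_le _)
    rw [Nat.choose_eq_zero_of_lt hkj, Nat.cast_zero, zero_div, zero_sub, abs_neg,
      abs_of_nonneg (by positivity)]
    calc ((k : ℝ) / N) ^ j ≤ (k : ℝ) / N :=
          pow_le_of_le_one (by positivity) ((div_le_one hN).2 hkN') (by omega)
      _ ≤ (j : ℝ) ^ 2 / N := by
          gcongr
          have : (k : ℝ) + 1 ≤ j := by exact_mod_cast hkj
          nlinarith
  · have hfac : ∀ i ∈ range j, 0 ≤ ((k : ℝ) - i) / (N - i) ∧ ((k : ℝ) - i) / (N - i) ≤ k / N ∧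
        (k : ℝ) / N - ((k : ℝ) - i) / (N - i) ≤ j / N := by
      intro i hi
      have hij : i < j := mem_range.1 hi
      have hik : (i : ℝ) ≤ k := by exact_mod_cast (hij.trans_le hjk).le
      have hiN : (i : ℝ) < N := by exact_mod_cast hij.trans_le hjN
      refine ⟨div_nonneg (sub_nonneg.2 hik) (sub_pos.2 hiN).le,
        sub_div_sub_le_div (Nat.cast_nonneg i) hkN' hiN, ?_⟩
      calc (k : ℝ) / N - ((k : ℝ) - i) / (N - i) ≤ i / N :=
            div_sub_sub_div_sub_le (Nat.cast_nonneg i) hik hiN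
        _ ≤ j / N := by gcongr
    have hy : ∀ i ∈ range j, (k : ℝ) / N ≤ 1 := fun i hi =>
      div_le_one_of_le₀ hkN' (Nat.cast_nonneg N)
    rw [cast_choose_div_cast_choose_eq_prod hjk hkN, abs_sub_comm,
      pow_eq_prod_const,
      abs_of_nonneg (sub_nonneg.2 (prod_le_prod (fun i hi => (hfac i hi).1)
        fun i hi => (hfac i hi).2.1))]
    calc ∏ _i ∈ range j, (k : ℝ) / N - ∏ i ∈ range j, ((k : ℝ) - i) / (N - i)
        ≤ ∑ i ∈ range j, ((k : ℝ) / N - ((k : ℝ) - i) / (N - i)) :=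
          prod_sub_prod_le_sum_sub _ (fun i hi => (hfac i hi).1) (fun i hi => (hfac i hi).2.1) hy
      _ ≤ ∑ _i ∈ range j, (j : ℝ) / N := sum_le_sum fun i hi => (hfac i hi).2.2
      _ = (j : ℝ) ^ 2 / N := by rw [sum_const, card_range, nsmul_eq_mul]; ring

section BernsteinBasis

variable {R : Type*} [Field R] [CharZero R]

theorem X_pow_eq_sum_bernsteinPolynomial {j N : ℕ} (hjN : j ≤ N) :
    (X ^ j : R[X]) =
      ∑ k ∈ range (N + 1), C ((k.choose j : R) / N.choose j) * bernsteinPolynomial R N k := by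
  have hterm : ∀ i ∈ range (N - j + 1),
      C (((j + i).choose j : R) / N.choose j) * bernsteinPolynomial R N (j + i) =
        X ^ j * (X ^ i * (1 - X) ^ (N - j - i) * ((N - j).choose i : R[X])) := by
    intro i hi
    have hchoose := Nat.choose_mul (n := N) (k := j + i) (s := j) (by omega)
    rw [Nat.add_sub_cancel_left] at hchoose
    have hcoeff : ((j + i).choose j : R) / N.choose j * N.choose (j + i) = (N - j).choose i := by
      rw [div_mul_eq_mul_div, div_eq_iff (by exact_mod_cast (Nat.choose_pos hjN).ne')]
      exact_mod_cast (mul_comm _ _).trans (hchoose.trans (mul_comm _ _))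
    rw [bernsteinPolynomial, show N - (j + i) = N - j - i by omega, ← map_natCast C,
      ← map_natCast C, ← hcoeff, C_mul, pow_add]
    ring
  rw [show N + 1 = j + (N - j + 1) by omega, sum_range_add,
    sum_eq_zero fun k hk => by simp [Nat.choose_eq_zero_of_lt (mem_range.1 hk)], zero_add,
    sum_congr rfl hterm, ← mul_sum, ← add_pow, add_sub_cancel, one_pow, mul_one]

/-- The coefficients of `w` in the Bernstein basis of degree `N`, when `w.natDegree ≤ N`. -/
def bernsteinCoeff (N : ℕ) (w : R[X]) (k : ℕ) : R :=
  ∑ j ∈ range (w.natDegree + 1), w.coeff j * ((k.choose j : R) / N.choose j)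

theorem eq_sum_bernsteinCoeff_mul {N : ℕ} {w : R[X]} (hN : w.natDegree ≤ N) :
    w = ∑ k ∈ range (N + 1), C (bernsteinCoeff N w k) * bernsteinPolynomial R N k := by
  conv_lhs => rw [w.as_sum_range_C_mul_X_pow]
  rw [sum_congr rfl fun j hj => by
    rw [X_pow_eq_sum_bernsteinPolynomial (R := R) (N := N) (by have := mem_range.1 hj; omega)]]
  simp only [bernsteinCoeff, mul_sum, map_sum, sum_mul, ← mul_assoc, ← C_mul]
  exact sum_comm

end BernsteinBasis

section BernsteinPositivity

variable {K : Type*} [Field K] [Algebra K ℝ]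

theorem abs_algebraMap_bernsteinCoeff_sub_aeval_le {N : ℕ} {w : K[X]} (hN : w.natDegree ≤ N)
    {k : ℕ} (hk : k ≤ N) :
    |algebraMap K ℝ (bernsteinCoeff N w k) - aeval ((k : ℝ) / N) w| ≤
      (∑ j ∈ range (w.natDegree + 1), |algebraMap K ℝ (w.coeff j)| * (j : ℝ) ^ 2) / N := by
  rw [aeval_eq_sum_range, bernsteinCoeff, map_sum, ← sum_sub_distrib, sum_div]
  refine (abs_sum_le_sum_abs _ _).trans (sum_le_sum fun j hj => ?_)
  have hjN : j ≤ N := by have := mem_range.1 hj; omega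
  rw [map_mul, map_div₀, map_natCast, map_natCast, Algebra.smul_def, ← mul_sub, abs_mul,
    mul_div_assoc]
  exact mul_le_mul_of_nonneg_left (abs_cast_choose_div_cast_choose_sub_pow_le hjN hk)
    (abs_nonneg _)

theorem exists_bernsteinCoeff_pos {w : K[X]} (hw : ∀ x ∈ Set.Icc (0 : ℝ) 1, 0 < aeval x w) :
    ∃ N, w.natDegree ≤ N ∧ ∀ k ≤ N, 0 < algebraMap K ℝ (bernsteinCoeff N w k) := by
  obtain ⟨x₀, hx₀, hmin⟩ := isCompact_Icc.exists_isMinOn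
    (Set.nonempty_Icc.2 (zero_le_one (α := ℝ))) w.continuous_aeval.continuousOn
  have hε := hw x₀ hx₀
  set M := ∑ j ∈ range (w.natDegree + 1), |algebraMap K ℝ (w.coeff j)| * (j : ℝ) ^ 2
  obtain ⟨N, hN⟩ := exists_nat_gt (max (w.natDegree : ℝ) (M / aeval x₀ w))
  have hdeg : (w.natDegree : ℝ) < N := (le_max_left _ _).trans_lt hN
  have hN0 : (0 : ℝ) < N := (Nat.cast_nonneg _).trans_lt hdeg
  have hMN : M / N < aeval x₀ w := by
    rw [div_lt_iff₀ hN0, ← div_lt_iff₀' hε]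
    exact (le_max_right _ _).trans_lt hN
  have hdegN : w.natDegree ≤ N := by exact_mod_cast hdeg.le
  refine ⟨N, hdegN, fun k hk => ?_⟩
  have hkN : (k : ℝ) ≤ N := by exact_mod_cast hk
  have hmin_k : aeval x₀ w ≤ aeval ((k : ℝ) / N) w :=
    hmin ⟨by positivity, (div_le_one hN0).2 hkN⟩
  have happrox := abs_le.1 (abs_algebraMap_bernsteinCoeff_sub_aeval_le hdegN hk)
  linarith [happrox.1]

end BernsteinPositivity

section Positivstellensatz

variable {F : Subfield ℝ} {a b : F}

theorem C_inv_sub_mul_C_sub (hab : (a : ℝ) < b) : C (b - a)⁻¹ * (C b - C a) = (1 : F[X]) := by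
  rw [← C_sub, ← C_mul, inv_mul_cancel₀ (sub_ne_zero.2 fun h => hab.ne' (congrArg _ h)), C_1]

theorem memPreordering_C_mul_bernsteinPolynomial_comp (hab : (a : ℝ) < b) {t : F}
    (ht : (0 : ℝ) ≤ t) (N k : ℕ) :
    MemPreordering F a b ((C t * bernsteinPolynomial F N k).comp (C (b - a)⁻¹ * (X - C a))) := by
  set c : F := (b - a)⁻¹
  have hc : (0 : ℝ) ≤ c := by simpa [c] using hab.le
  have h1 : 1 - C c * (X - C a) = C c * (C b - X) := by
    linear_combination -C_inv_sub_mul_C_sub hab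
  have hterm : (C t * bernsteinPolynomial F N k).comp (C c * (X - C a)) =
      C (t * N.choose k * (c ^ k * c ^ (N - k))) * (X - C a) ^ k * (C b - X) ^ (N - k) := by
    simp only [bernsteinPolynomial, mul_comp, C_comp, natCast_comp, pow_comp, sub_comp, one_comp,
      X_comp, h1, mul_pow, map_mul, map_pow, map_natCast]
    ring
  rw [hterm]
  exact memPreordering_C_mul_pow_mul_pow (by push_cast; positivity) k (N - k)

theorem memPreordering_of_pos (hab : (a : ℝ) < b) {f : F[X]}
    (hf : ∀ x ∈ Set.Icc (a : ℝ) b, 0 < aeval x f) : MemPreordering F a b f := by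
  set w := f.comp (C a + C (b - a) * X)
  have hw : ∀ y ∈ Set.Icc (0 : ℝ) 1, 0 < aeval y w := by
    intro y hy
    have hy' : aeval y (C a + C (b - a) * X) = a + (b - a : F) * y := by
      simp only [map_add, map_mul, aeval_C, aeval_X]; rfl
    rw [aeval_comp, hy']
    apply hf
    push_cast
    constructor <;> nlinarith [hy.1, hy.2]
  obtain ⟨N, hN, hpos⟩ := exists_bernsteinCoeff_pos hw
  have hfw : f = w.comp (C (b - a)⁻¹ * (X - C a)) := by
    rw [comp_assoc, add_comp, mul_comp, C_comp, C_comp, X_comp, C_sub, ← mul_assoc,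
      mul_comm (C b - C a), C_inv_sub_mul_C_sub hab, one_mul, add_sub_cancel, comp_X]
  rw [hfw, eq_sum_bernsteinCoeff_mul hN, Polynomial.sum_comp]
  exact memPreordering_sum _ fun k hk => memPreordering_C_mul_bernsteinPolynomial_comp hab
    (hpos k (Nat.lt_succ_iff.1 (mem_range.1 hk))).le N k

theorem isRoot_of_aeval_coe_eq_zero {c : F} {f : F[X]} (h : aeval (c : ℝ) f = 0) :
    f.IsRoot c := by
  rw [show (c : ℝ) = algebraMap F ℝ c from rfl, aeval_algebraMap_apply] at h
  simpa using h

theorem exists_factor_of_not_pos {f : F[X]} (hf0 : f ≠ 0)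
    (hf : ∀ x ∈ Set.Icc (a : ℝ) b, 0 ≤ aeval x f)
    (hnpos : ¬ ∀ x ∈ Set.Icc (a : ℝ) b, 0 < aeval x f) :
    ∃ p q : F[X], f = p * q ∧ 0 < p.natDegree ∧ (∀ x ∈ Set.Icc (a : ℝ) b, 0 ≤ aeval x p) ∧
      ∀ g, MemPreordering F a b g → MemPreordering F a b (p * g) := by
  simp only [not_forall, not_lt] at hnpos
  obtain ⟨r, hr, hr0⟩ := hnpos
  have hfr : aeval r f = 0 := le_antisymm hr0 (hf r hr)
  rcases hr.1.eq_or_lt with rfl | har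
  · obtain ⟨q, rfl⟩ := dvd_iff_isRoot.2 (isRoot_of_aeval_coe_eq_zero hfr)
    exact ⟨X - C a, q, rfl, by simp, fun x hx => by
      simp only [map_sub, aeval_X, aeval_C, sub_nonneg]; exact hx.1,
      fun g hg => hg.X_sub_C_mul⟩
  rcases hr.2.eq_or_lt with rfl | hrb
  · obtain ⟨q, hq⟩ := dvd_iff_isRoot.2 (isRoot_of_aeval_coe_eq_zero hfr)
    refine ⟨C b - X, -q, by rw [hq]; ring, ?_, fun x hx => by
      simp only [map_sub, aeval_X, aeval_C, sub_nonneg]; exact hx.2,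
      fun g hg => hg.C_sub_X_mul⟩
    rw [← neg_sub, natDegree_neg, natDegree_X_sub_C]
    exact one_pos
  · have hmin : IsLocalMin (fun x => aeval x f) r :=
      Filter.mem_of_superset (Ioo_mem_nhds har hrb) fun x hx => by
        simpa [hfr] using hf x (Set.Ioo_subset_Icc_self hx)
    have hdeg : 0 < (minpoly F r).natDegree :=
      minpoly.natDegree_pos (IsAlgebraic.isIntegral ⟨f, hf0, hfr⟩)
    obtain ⟨q, rfl⟩ := minpoly_sq_dvd_of_isLocalMin hf0 hfr hmin
    exact ⟨minpoly F r ^ 2, q, rfl, by rw [natDegree_pow]; omega,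
      fun x _ => by rw [map_pow]; positivity, fun g hg => hg.sq_mul _⟩

theorem memPreordering_of_nonneg (hab : (a : ℝ) < b) (f : F[X])
    (hf : ∀ x ∈ Set.Icc (a : ℝ) b, 0 ≤ aeval x f) : MemPreordering F a b f := by
  induction hn : f.natDegree using Nat.strong_induction_on generalizing f with
  | _ n ih =>
  by_cases hf0 : f = 0
  · exact hf0 ▸ memPreordering_of_sumWtSq sumWtSq_zero
  by_cases hpos : ∀ x ∈ Set.Icc (a : ℝ) b, 0 < aeval x f
  · exact memPreordering_of_pos hab hpos
  obtain ⟨p, q, rfl, hpdeg, hp, hmul⟩ := exists_factor_of_not_pos hf0 hf hpos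
  have hp0 : p ≠ 0 := ne_zero_of_natDegree_gt hpdeg
  have hq0 : q ≠ 0 := right_ne_zero_of_mul hf0
  refine hmul q (ih q.natDegree ?_ q (nonneg_of_nonneg_mul hab hp0 hp hf) rfl)
  rw [← hn, natDegree_mul hp0 hq0]
  omega

end Positivstellensatz

theorem stmt3 (F : Subfield ℝ) (a b : F) (hab : (a:ℝ) < (b:ℝ)) (f : F[X])
    (hf : ∀ x : ℝ, (a:ℝ) ≤ x → x ≤ (b:ℝ) → 0 ≤ pev F f x) :
    ∃ σ₀ σ₁ σ₂ σ₃ : F[X], SumWtSq F σ₀ ∧ SumWtSq F σ₁ ∧ SumWtSq F σ₂ ∧ SumWtSq F σ₃ ∧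
      f = σ₀ + (X - C a) * σ₁ + (C b - X) * σ₂ + (X - C a) * (C b - X) * σ₃ :=
  memPreordering_of_nonneg hab f fun x hx => hf x hx.1 hx.2
end

section
/- Let F be a subfield of ℝ and d ∈ F with d > 0. Let a, b be the real numbers −√d, √d (not necessarily in F). For any c, e ∈ F with −√d ≤ c < e ≤ √d, the polynomial (x−c)(x−e) lies in the preordering of F[x] generated by x² − d, i.e., (x−c)(x−e) = σ₀ + σ₁(x² − d) with σ₀, σ₁ ∈ ∑ F_{≥0} F[x]². -/
open Polynomial

set_option maxHeartbeats 1000000 in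
theorem stmt4 (F : Subfield ℝ) (d : F) (hd : 0 < (d:ℝ)) (c e : F)
    (hc : -Real.sqrt (d:ℝ) ≤ (c:ℝ)) (hce : (c:ℝ) < (e:ℝ)) (he : (e:ℝ) ≤ Real.sqrt (d:ℝ)) :
    ∃ σ₀ σ₁ : F[X], SumWtSq F σ₀ ∧ SumWtSq F σ₁ ∧
      (X - C c) * (X - C e) = σ₀ + σ₁ * (X ^ 2 - C d) := by
  have hsq : Real.sqrt (d:ℝ) ^ 2 = (d:ℝ) := Real.sq_sqrt hd.le
  have hcs : (c:ℝ) ≤ Real.sqrt (d:ℝ) := le_of_lt (lt_of_lt_of_le hce he)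
  have hes : -Real.sqrt (d:ℝ) ≤ (e:ℝ) := le_trans hc hce.le
  have h1 : (0:ℝ) ≤ (Real.sqrt (d:ℝ) + c) * (Real.sqrt (d:ℝ) + e) :=
    mul_nonneg (by linarith) (by linarith)
  have h2 : (0:ℝ) ≤ (Real.sqrt (d:ℝ) - c) * (Real.sqrt (d:ℝ) - e) :=
    mul_nonneg (by linarith) (by linarith)
  have hced : (0:ℝ) ≤ (c:ℝ) * e + d := by nlinarith
  have hc2 : (c:ℝ)^2 ≤ (d:ℝ) := by nlinarith
  have he2 : (e:ℝ)^2 ≤ (d:ℝ) := by nlinarith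
  have hdF : (d:F) ≠ 0 := fun h => by rw [h] at hd; simp at hd
  by_cases h0 : c * e + d = 0
  · -- degenerate case: c = -√d, e = √d
    refine ⟨0, 1, ⟨0, ![], ![], by simp, by simp⟩,
      ⟨1, ![1], ![1], by simp, by simp⟩, ?_⟩
    have h0' : ((c*e+d : F) : ℝ) = 0 := by rw [h0]; simp
    push_cast at h0'
    have hsum : (c:ℝ) + e = 0 := by nlinarith
    have hce' : c * e = -d := Subtype.coe_injective (by push_cast; linarith)
    have hcesum : c + e = 0 := Subtype.coe_injective (by push_cast; linarith)
    have hA : C c + C e = 0 := by rw [← C_add, hcesum, C_0]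
    have hB : C c * C e = - C d := by rw [← C_mul, hce', C_neg]
    linear_combination (-X) * hA + hB
  · -- main case
    have hα0 : ((c*e+d : F) : ℝ) ≠ 0 := fun h =>
      h0 (Subtype.coe_injective (by push_cast at h ⊢; linarith))
    obtain ⟨α, hαdef⟩ : ∃ α : F, α = (c*e+d)/(d+d) := ⟨_, rfl⟩
    have hαR : (α:ℝ) = ((c:ℝ)*e+d)/((d:ℝ)+d) := by rw [hαdef]; push_cast; ring
    have hαpos : (0:ℝ) < (α:ℝ) := by
      rw [hαR]
      apply div_pos
      · rcases lt_or_eq_of_le hced with h | h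
        · linarith
        · exact absurd (by push_cast; linarith : ((c*e+d:F):ℝ) = 0) hα0
      · linarith
    have hαne : α ≠ 0 := fun h => by rw [h] at hαpos; simp at hαpos
    have hαRne : (α:ℝ) ≠ 0 := ne_of_gt hαpos
    obtain ⟨u, hudef⟩ : ∃ u : F, u = (c+e)/(α+α) := ⟨_, rfl⟩
    obtain ⟨β, hβdef⟩ : ∃ β : F, β = c*e + (1-α)*d - α*u^2 := ⟨_, rfl⟩
    obtain ⟨γ, hγdef⟩ : ∃ γ : F, γ = 1 - α := ⟨_, rfl⟩
    have h1u : (α+α)*u = c + e := by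
      rw [hudef]
      have : (α+α : F) ≠ 0 := fun h => by
        have : ((α+α:F):ℝ) = 0 := by rw [h]; simp
        push_cast at this; linarith
      field_simp
    have huR : (u:ℝ) = ((c:ℝ)+e)/((α:ℝ)+α) := by rw [hudef]; push_cast; ring
    have hβR : (β:ℝ) = (c:ℝ)*e + (1-α)*d - α*(u:ℝ)^2 := by rw [hβdef]; push_cast; ring
    have hdRne : (d:ℝ) ≠ 0 := ne_of_gt hd
    have hced' : ((c:ℝ)*e+d) ≠ 0 := by
      intro h; exact hα0 (by push_cast; linarith)
    have hkey : 4*(α:ℝ)*d*β = ((d:ℝ)-c^2)*((d:ℝ)-e^2) := by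
      rw [hβR, huR, hαR]
      field_simp
      ring
    have hβpos : (0:ℝ) ≤ (β:ℝ) := by
      have hk : (0:ℝ) ≤ ((d:ℝ)-c^2)*((d:ℝ)-e^2) := mul_nonneg (by linarith) (by linarith)
      nlinarith [mul_pos (mul_pos (by norm_num : (0:ℝ) < 4) hαpos) hd]
    have hγpos : (0:ℝ) ≤ (γ:ℝ) := by
      have hle : (α:ℝ) ≤ 1 := by
        rw [hαR, div_le_one (by linarith)]
        nlinarith
      rw [hγdef]; push_cast; linarith
    refine ⟨C α * (X - C u)^2 + C β, C γ, ?_, ?_, ?_⟩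
    · exact ⟨2, ![α, β], ![X - C u, 1], by
        intro i; fin_cases i <;> simp [hαpos.le, hβpos], by
        simp [Fin.sum_univ_two]⟩
    · exact ⟨1, ![γ], ![1], by intro i; fin_cases i <;> simp [hγpos], by simp⟩
    · have hC1 : C c + C e = (C α + C α) * C u := by
        rw [← C_add, ← h1u, C_mul, C_add]
      have hC2 : C β = C c * C e + (1 - C α) * C d - C α * C u^2 := by
        rw [hβdef]
        rw [C_sub, C_add, C_mul, C_mul, C_sub, C_1, C_mul, ← C_pow]
      have hC3 : C γ = 1 - C α := by rw [hγdef, C_sub, C_1]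
      linear_combination (-X) * hC1 - hC2 - (X^2 - C d) * hC3
end

section
/- Let F be a subfield of ℝ and d ∈ F with d > 0 and √d ∉ F. If f ∈ F[x] is nonnegative on [−√d, √d], then f lies in the preordering of F[x] generated by d − x², i.e., f = σ₀ + σ₁(d − x²) with σ₀, σ₁ ∈ ∑ F_{≥0} F[x]². -/
open Polynomial

/-!
Strictly positive polynomials are handled by Pólya's theorem on Bernstein coefficients: if
`q > 0` on `[0, 1]`, then for large `N` the coefficients of `q` in the basis
`Xⁱ (1 - X)ᴺ⁻ⁱ` are positive, and they lie in `F`. After enlarging `[-√d, √d]` to `[-c, c]`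
with `c ∈ ℚ`, `c > √d`, this writes `f` as a nonnegative combination of products of powers of
`c + X` and `c - X`, which lie in the preordering because
`2c (c ± x) = (c ± x)² + (c² - d) + (d - x²)`.

A nonnegative `f` with a root `x₀` in the interval is the product of a nonconstant element of the
preordering and a polynomial that is again nonnegative there, so induction on the degree applies.
At an endpoint, `√d ∉ F` makes `X² - d` the minimal polynomial of `x₀`. At an interior root, `x₀`
is a local minimum of `f`, hence a root of `f'`, and separability of the minimal polynomial `m`
gives `m² ∣ f`.
-/

open Finset

theorem Polynomial.Separable.sq_dvd_of_dvd_of_dvd_derivative {R : Type*} [CommRing R]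
    {m f : R[X]} (hm : m.Separable) (hf : m ∣ f) (hf' : m ∣ derivative f) : m ^ 2 ∣ f := by
  obtain ⟨g, rfl⟩ := hf
  rw [derivative_mul] at hf'
  have h1 : m ∣ derivative m * g := (dvd_add_left (dvd_mul_right m _)).1 hf'
  obtain ⟨h, rfl⟩ := hm.dvd_of_dvd_mul_left (by rwa [mul_comm] at h1)
  exact ⟨h, by ring⟩

namespace IntervalPositivstellensatz

theorem choose_mul_X_pow_eq_sum_range {R : Type*} [CommRing R] {k N : ℕ} (hk : k ≤ N) :
    (N.choose k : R[X]) * X ^ k =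
      ∑ i ∈ range (N + 1), ((i.choose k * N.choose i : ℕ) : R[X]) * X ^ i * (1 - X) ^ (N - i) := by
  rw [← sum_range_add_sum_Ico _ (show k ≤ N + 1 by omega),
    sum_eq_zero fun i hi => by rw [Nat.choose_eq_zero_of_lt (mem_range.1 hi)]; simp,
    zero_add, sum_Ico_eq_sum_range, show N + 1 - k = N - k + 1 by omega]
  have hterm : ∀ m ∈ range (N - k + 1),
      (((k + m).choose k * N.choose (k + m) : ℕ) : R[X]) * X ^ (k + m) * (1 - X) ^ (N - (k + m)) =
        (N.choose k : R[X]) * X ^ k *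
          (X ^ m * (1 - X) ^ (N - k - m) * ((N - k).choose m : R[X])) := by
    intro m _
    rw [mul_comm ((k + m).choose k), Nat.choose_mul (by omega : k ≤ k + m),
      Nat.add_sub_cancel_left, show N - (k + m) = N - k - m by omega]
    push_cast
    ring
  rw [sum_congr rfl hterm, ← mul_sum, ← add_pow, add_sub_cancel, one_pow, mul_one]

noncomputable def bernsteinCoeff {K : Type*} [Field K] (q : K[X]) (N i : ℕ) : K :=
  N.choose i * ∑ k ∈ range (q.natDegree + 1), q.coeff k * i.choose k / N.choose k

theorem sum_bernsteinCoeff_mul {K : Type*} [Field K] [CharZero K] {q : K[X]} {N : ℕ}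
    (hN : q.natDegree ≤ N) :
    ∑ i ∈ range (N + 1), C (bernsteinCoeff q N i) * X ^ i * (1 - X) ^ (N - i) = q := by
  have hX : ∀ k ∈ range (q.natDegree + 1), C (q.coeff k) * X ^ k =
      ∑ i ∈ range (N + 1), C (q.coeff k / N.choose k) *
        (((i.choose k * N.choose i : ℕ) : K[X]) * X ^ i * (1 - X) ^ (N - i)) := by
    intro k hk
    have hkN : k ≤ N := by have := mem_range.1 hk; omega
    rw [← mul_sum, ← choose_mul_X_pow_eq_sum_range hkN, ← mul_assoc, ← C_eq_natCast, ← C_mul,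
      div_mul_cancel₀ _ (Nat.cast_ne_zero.2 (Nat.choose_pos hkN).ne')]
  conv_rhs => rw [as_sum_range_C_mul_X_pow q, sum_congr rfl hX, sum_comm]
  refine sum_congr rfl fun i _ => ?_
  simp only [bernsteinCoeff, mul_sum, map_sum, sum_mul]
  refine sum_congr rfl fun k _ => ?_
  simp only [div_eq_mul_inv, map_mul, map_natCast]
  push_cast
  ring

theorem bernsteinCoeff_map {K L : Type*} [Field K] [Field L] (f : K →+* L) (q : K[X]) (N i : ℕ) :
    f (bernsteinCoeff q N i) = bernsteinCoeff (q.map f) N i := by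
  simp [bernsteinCoeff, natDegree_map, coeff_map]

theorem choose_div_choose_eq_prod {i k N : ℕ} (hki : k ≤ i) (hiN : i ≤ N) :
    (i.choose k : ℝ) / N.choose k = ∏ j ∈ range k, ((i : ℝ) - j) / (N - j) := by
  have hdesc : ∀ n, k ≤ n → (n.choose k : ℝ) = (∏ j ∈ range k, ((n : ℝ) - j)) / k.factorial := by
    intro n hkn
    rw [eq_div_iff (by positivity), mul_comm, ← Nat.cast_mul,
      ← Nat.descFactorial_eq_factorial_mul_choose, Nat.descFactorial_eq_prod_range,
      Nat.cast_prod]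
    exact prod_congr rfl fun j hj => Nat.cast_sub (by have := mem_range.1 hj; omega)
  rw [hdesc i hki, hdesc N (hki.trans hiN), div_div_div_cancel_right₀ (by positivity),
    prod_div_distrib]

theorem pow_le_choose_div_choose_le {i k N : ℕ} (hki : k ≤ i) (hiN : i ≤ N) (hN : 0 < N) :
    (((i : ℝ) - k) / N) ^ k ≤ (i.choose k : ℝ) / N.choose k ∧
      (i.choose k : ℝ) / N.choose k ≤ ((i : ℝ) / N) ^ k := by
  have hN' : (0 : ℝ) < N := by exact_mod_cast hN
  have hk : (k : ℝ) ≤ i := by exact_mod_cast hki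
  have hi : (i : ℝ) ≤ N := by exact_mod_cast hiN
  have hlo : 0 ≤ ((i : ℝ) - k) / N := div_nonneg (by linarith) hN'.le
  have hfac : ∀ j ∈ range k, ((i : ℝ) - k) / N ≤ ((i : ℝ) - j) / (N - j) ∧
      ((i : ℝ) - j) / (N - j) ≤ i / N := by
    intro j hj
    have hjk : (j : ℝ) < k := by exact_mod_cast mem_range.1 hj
    have hj0 : (0 : ℝ) ≤ j := j.cast_nonneg
    have hNj : (0 : ℝ) < N - j := by linarith
    constructor
    · rw [div_le_div_iff₀ hN' hNj]; nlinarith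
    · rw [div_le_div_iff₀ hNj hN']; nlinarith
  rw [choose_div_choose_eq_prod hki hiN]
  constructor
  · exact (prod_le_prod (fun _ _ => hlo) fun j hj => (hfac j hj).1).trans_eq'
      (by rw [prod_const, card_range])
  · exact (prod_le_prod (fun j hj => hlo.trans (hfac j hj).1) fun j hj => (hfac j hj).2).trans_eq
      (by rw [prod_const, card_range])

theorem abs_choose_div_choose_sub_pow_le {i k N : ℕ} (hiN : i ≤ N) (hkN : k ≤ N) :
    |(i.choose k : ℝ) / N.choose k - ((i : ℝ) / N) ^ k| ≤ k ^ 2 / N := by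
  rcases Nat.eq_zero_or_pos N with rfl | hN
  · obtain rfl : i = 0 := by omega
    obtain rfl : k = 0 := by omega
    simp
  have hN' : (0 : ℝ) < N := by exact_mod_cast hN
  have hs : 0 ≤ (i : ℝ) / N := by positivity
  have hi : (i : ℝ) ≤ N := by exact_mod_cast hiN
  have hs1 : (i : ℝ) / N ≤ 1 := (div_le_one hN').2 hi
  rcases lt_or_ge i k with hik | hki
  · have hk0 : k ≠ 0 := by omega
    have hik' : (i : ℝ) ≤ k := by exact_mod_cast hik.le
    have hk1 : (k : ℝ) ≤ k ^ 2 := by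
      have : (1 : ℝ) ≤ k := by exact_mod_cast Nat.one_le_iff_ne_zero.2 hk0
      nlinarith
    rw [Nat.choose_eq_zero_of_lt hik, Nat.cast_zero, zero_div, zero_sub, abs_neg,
      abs_of_nonneg (pow_nonneg hs k)]
    calc ((i : ℝ) / N) ^ k ≤ i / N := pow_le_of_le_one hs hs1 hk0
      _ ≤ k ^ 2 / N := by gcongr; linarith
  set lo : ℝ := ((i : ℝ) - k) / N
  have hk : (k : ℝ) ≤ i := by exact_mod_cast hki
  have hlo : 0 ≤ lo := div_nonneg (by linarith) hN'.le
  obtain ⟨hlower, hupper⟩ := pow_le_choose_div_choose_le hki hiN hN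
  have hmax : max |(i : ℝ) / N| |lo| ^ (k - 1) ≤ 1 :=
    pow_le_one₀ (by positivity) (max_le (by rwa [abs_of_nonneg hs])
      (by rw [abs_of_nonneg hlo]; exact (div_le_one hN').2 (by linarith)))
  rw [abs_sub_comm, abs_of_nonneg (sub_nonneg.2 hupper)]
  calc ((i : ℝ) / N) ^ k - (i.choose k : ℝ) / N.choose k
      ≤ |((i : ℝ) / N) ^ k - lo ^ k| := by linarith [le_abs_self (((i : ℝ) / N) ^ k - lo ^ k)]
    _ ≤ |(i : ℝ) / N - lo| * k * max |(i : ℝ) / N| |lo| ^ (k - 1) := abs_pow_sub_pow_le _ _ _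
    _ ≤ k / N * k := by
      rw [show (i : ℝ) / N - lo = k / N by ring, abs_of_nonneg (by positivity)]
      exact mul_le_of_le_one_right (by positivity) hmax
    _ = k ^ 2 / N := by ring

theorem abs_bernsteinCoeff_div_sub_eval_le (p : ℝ[X]) {N i : ℕ} (hpN : p.natDegree ≤ N)
    (hiN : i ≤ N) :
    |bernsteinCoeff p N i / N.choose i - p.eval ((i : ℝ) / N)| ≤
      (∑ k ∈ range (p.natDegree + 1), |p.coeff k|) * p.natDegree ^ 2 / N := by
  have hc : (N.choose i : ℝ) ≠ 0 := Nat.cast_ne_zero.2 (Nat.choose_pos hiN).ne'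
  rw [bernsteinCoeff, mul_div_cancel_left₀ _ hc, eval_eq_sum_range, ← sum_sub_distrib, sum_mul,
    sum_div]
  refine (abs_sum_le_sum_abs _ _).trans (sum_le_sum fun k hk => ?_)
  have hk : k ≤ p.natDegree := Nat.lt_succ_iff.1 (mem_range.1 hk)
  rw [mul_div_assoc, ← mul_sub, abs_mul, mul_div_assoc]
  gcongr
  exact (abs_choose_div_choose_sub_pow_le hiN (hk.trans hpN)).trans (by gcongr)

theorem exists_bernsteinCoeff_pos (p : ℝ[X]) (hp : ∀ x ∈ Set.Icc (0 : ℝ) 1, 0 < p.eval x) :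
    ∃ N, p.natDegree ≤ N ∧ ∀ i ≤ N, 0 < bernsteinCoeff p N i := by
  obtain ⟨x₀, hx₀, hmin⟩ := isCompact_Icc.exists_isMinOn (Set.nonempty_Icc.2 zero_le_one)
    p.continuous.continuousOn
  set B := (∑ k ∈ range (p.natDegree + 1), |p.coeff k|) * p.natDegree ^ 2
  have hB : 0 ≤ B := by positivity
  have hδ : 0 < p.eval x₀ := hp x₀ hx₀
  obtain ⟨N, hN⟩ := exists_nat_gt (B / p.eval x₀ + p.natDegree)
  have hBδ : 0 ≤ B / p.eval x₀ := div_nonneg hB hδ.le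
  have hdeg' : (p.natDegree : ℝ) < N := by linarith
  have hN0 : (0 : ℝ) < N := p.natDegree.cast_nonneg.trans_lt hdeg'
  have hBN : B / N < p.eval x₀ := by
    rw [div_lt_iff₀ hN0, ← div_lt_iff₀' hδ]
    linarith
  have hdeg : p.natDegree ≤ N := by exact_mod_cast hdeg'.le
  refine ⟨N, hdeg, fun i hi => ?_⟩
  have hx : (i : ℝ) / N ∈ Set.Icc (0 : ℝ) 1 :=
    ⟨by positivity, (div_le_one hN0).2 (by exact_mod_cast hi)⟩
  have hclose := (abs_le.1 (abs_bernsteinCoeff_div_sub_eval_le p hdeg hi)).1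
  have hle : p.eval x₀ ≤ p.eval ((i : ℝ) / N) := hmin hx
  refine (div_pos_iff_of_pos_right (Nat.cast_pos.2 (Nat.choose_pos hi))).1 ?_
  linarith

theorem exists_rat_gt_forall_pos_on_Icc {h : ℝ → ℝ} (hh : Continuous h) {s : ℝ} (hs : 0 ≤ s)
    (H : ∀ x ∈ Set.Icc (-s) s, 0 < h x) :
    ∃ c : ℚ, s < c ∧ ∀ x ∈ Set.Icc (-(c : ℝ)) c, 0 < h x := by
  obtain ⟨δ, hδ, hsub⟩ :=
    isCompact_Icc.exists_thickening_subset_open (isOpen_lt continuous_const hh) H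
  obtain ⟨c, hsc, hcs⟩ := exists_rat_btwn (lt_add_of_pos_right s hδ)
  refine ⟨c, hsc, fun x hx => hsub (Metric.mem_thickening_iff.2
    ⟨max (-s) (min x s), ⟨le_max_left _ _, max_le (by linarith) (min_le_right _ _)⟩, ?_⟩)⟩
  rw [Real.dist_eq, abs_lt]
  simp only [max_def, min_def]
  split_ifs <;> constructor <;> linarith [hx.1, hx.2]

theorem nonneg_on_Icc_of_nonneg_off_countable {h : ℝ → ℝ} (hh : Continuous h) {R : Set ℝ}
    (hR : R.Countable) {a b : ℝ} (hab : a < b) (H : ∀ x ∈ Set.Ioo a b, x ∉ R → 0 ≤ h x) :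
    ∀ x ∈ Set.Icc a b, 0 ≤ h x := by
  have hclosed : IsClosed {x | 0 ≤ h x} := isClosed_le continuous_const hh
  rw [← closure_Ioo hab.ne]
  refine closure_minimal ?_ hclosed
  exact ((hR.dense_compl ℝ).open_subset_closure_inter isOpen_Ioo).trans
    (closure_minimal (fun y hy => H y hy.1 hy.2) hclosed)

theorem C_inv_add_self_mul {K : Type*} [Field K] [CharZero K] {c : K} (hc : c ≠ 0) :
    C (c + c)⁻¹ * (C c + C c) = 1 := by
  rw [← C_add, ← C_mul, inv_mul_cancel₀ (mt add_self_eq_zero.1 hc), C_1]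

variable {F : Subfield ℝ}

variable (F) in
def weightedSquares : Submonoid F[X] where
  carrier := {p | ∃ t : F, 0 ≤ (t : ℝ) ∧ ∃ g, p = C t * g ^ 2}
  mul_mem' := by
    rintro _ _ ⟨s, hs, g, rfl⟩ ⟨t, ht, h, rfl⟩
    exact ⟨s * t, mul_nonneg hs ht, g * h, by rw [C_mul]; ring⟩
  one_mem' := ⟨1, zero_le_one, 1, by simp⟩

variable (F) in
noncomputable def sumsOfWeightedSquares : Subsemiring F[X] :=
  (weightedSquares F).subsemiringClosure

theorem C_mul_sq_mem_sumsOfWeightedSquares {t : F} (ht : 0 ≤ (t : ℝ)) (g : F[X]) :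
    C t * g ^ 2 ∈ sumsOfWeightedSquares F :=
  AddSubmonoid.subset_closure ⟨t, ht, g, rfl⟩

theorem sq_mem_sumsOfWeightedSquares (g : F[X]) : g ^ 2 ∈ sumsOfWeightedSquares F := by
  simpa using C_mul_sq_mem_sumsOfWeightedSquares (t := 1) zero_le_one g

theorem mem_sumsOfWeightedSquares_iff {σ : F[X]} :
    σ ∈ sumsOfWeightedSquares F ↔ SumWtSq F σ := by
  constructor
  · intro h
    obtain ⟨l, hl, rfl⟩ := AddSubmonoid.exists_list_of_mem_closure h
    choose t ht g hg using fun i : Fin l.length => hl (l.get i) (List.get_mem l i)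
    refine ⟨l.length, t, g, ht, ?_⟩
    conv_lhs => rw [← List.ofFn_get l, List.sum_ofFn]
    exact sum_congr rfl fun i _ => hg i
  · rintro ⟨n, t, g, ht, rfl⟩
    exact sum_mem fun i _ => C_mul_sq_mem_sumsOfWeightedSquares (ht i) (g i)

theorem aeval_nonneg_of_mem_sumsOfWeightedSquares {σ : F[X]}
    (hσ : σ ∈ sumsOfWeightedSquares F) (x : ℝ) : 0 ≤ aeval x σ := by
  obtain ⟨n, t, g, ht, rfl⟩ := mem_sumsOfWeightedSquares_iff.1 hσ
  simp only [map_sum, map_mul, map_pow, aeval_C]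
  exact sum_nonneg fun i _ => mul_nonneg (ht i) (sq_nonneg _)

variable (F) in
noncomputable def preordering (g : F[X]) : Subsemiring F[X] where
  carrier := {f | ∃ σ₀ ∈ sumsOfWeightedSquares F, ∃ σ₁ ∈ sumsOfWeightedSquares F,
    f = σ₀ + σ₁ * g}
  zero_mem' := ⟨0, zero_mem _, 0, zero_mem _, by ring⟩
  one_mem' := ⟨1, one_mem _, 0, zero_mem _, by ring⟩
  add_mem' := by
    rintro _ _ ⟨σ₀, hσ₀, σ₁, hσ₁, rfl⟩ ⟨τ₀, hτ₀, τ₁, hτ₁, rfl⟩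
    exact ⟨σ₀ + τ₀, add_mem hσ₀ hτ₀, σ₁ + τ₁, add_mem hσ₁ hτ₁, by ring⟩
  mul_mem' := by
    rintro _ _ ⟨σ₀, hσ₀, σ₁, hσ₁, rfl⟩ ⟨τ₀, hτ₀, τ₁, hτ₁, rfl⟩
    refine ⟨σ₀ * τ₀ + σ₁ * τ₁ * g ^ 2, ?_, σ₀ * τ₁ + σ₁ * τ₀, ?_, by ring⟩
    · exact add_mem (mul_mem hσ₀ hτ₀) (mul_mem (mul_mem hσ₁ hτ₁) (sq_mem_sumsOfWeightedSquares g))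
    · exact add_mem (mul_mem hσ₀ hτ₁) (mul_mem hσ₁ hτ₀)

theorem mem_preordering_of_mem_sumsOfWeightedSquares {g σ : F[X]}
    (hσ : σ ∈ sumsOfWeightedSquares F) : σ ∈ preordering F g :=
  ⟨σ, hσ, 0, zero_mem _, by ring⟩

theorem self_mem_preordering (g : F[X]) : g ∈ preordering F g :=
  ⟨0, zero_mem _, 1, one_mem _, by ring⟩

theorem C_mem_preordering {g : F[X]} {t : F} (ht : 0 ≤ (t : ℝ)) : C t ∈ preordering F g :=
  mem_preordering_of_mem_sumsOfWeightedSquares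
    (by simpa using C_mul_sq_mem_sumsOfWeightedSquares ht 1)

theorem aeval_nonneg_of_mem_preordering {g f : F[X]} (hf : f ∈ preordering F g) {x : ℝ}
    (hx : 0 ≤ aeval x g) : 0 ≤ aeval x f := by
  obtain ⟨σ₀, hσ₀, σ₁, hσ₁, rfl⟩ := hf
  rw [map_add, map_mul]
  exact add_nonneg (aeval_nonneg_of_mem_sumsOfWeightedSquares hσ₀ x)
    (mul_nonneg (aeval_nonneg_of_mem_sumsOfWeightedSquares hσ₁ x) hx)

theorem C_add_X_mem_preordering {c d : F} (hc : 0 < (c : ℝ)) (hcd : (d : ℝ) < (c : ℝ) ^ 2) :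
    C c + X ∈ preordering F (C d - X ^ 2) ∧ C c - X ∈ preordering F (C d - X ^ 2) := by
  set a : F := (c + c)⁻¹
  have ha : 0 ≤ (a : ℝ) := by push_cast [a]; exact inv_nonneg.2 (by linarith)
  have hδ : 0 ≤ ((a * (c ^ 2 - d) : F) : ℝ) := by push_cast; exact mul_nonneg ha (by linarith)
  have hac : C a * (C c + C c) = 1 := C_inv_add_self_mul (by rintro rfl; simp at hc)
  have hmem : ∀ y : F[X], y ^ 2 = X ^ 2 → C c + y ∈ preordering F (C d - X ^ 2) := fun y hy => by
    have key : C c + y = C a * (y + C c) ^ 2 + C (a * (c ^ 2 - d)) + C a * (C d - X ^ 2) := by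
      simp only [map_mul, map_sub, map_pow]
      linear_combination (-(y + C c)) * hac - C a * hy
    rw [key]
    refine add_mem (add_mem ?_ (C_mem_preordering hδ))
      (mul_mem (C_mem_preordering ha) (self_mem_preordering _))
    exact mem_preordering_of_mem_sumsOfWeightedSquares
      (C_mul_sq_mem_sumsOfWeightedSquares ha _)
  exact ⟨hmem X rfl, by simpa [sub_eq_add_neg] using hmem (-X) (by ring)⟩

theorem exists_bernsteinCoeff_pos_of_aeval (q : F[X])
    (hq : ∀ x ∈ Set.Icc (0 : ℝ) 1, 0 < aeval x q) :
    ∃ N, q.natDegree ≤ N ∧ ∀ i ≤ N, 0 < ((bernsteinCoeff q N i : F) : ℝ) := by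
  obtain ⟨N, hN, hpos⟩ := exists_bernsteinCoeff_pos (q.map (algebraMap F ℝ))
    fun x hx => by simpa only [eval_map_algebraMap] using hq x hx
  refine ⟨N, by rwa [natDegree_map] at hN, fun i hi => ?_⟩
  have := hpos i hi
  rwa [← bernsteinCoeff_map] at this

theorem mem_preordering_of_pos_on_Icc {c d : F} (hc : 0 < (c : ℝ)) (hcd : (d : ℝ) < (c : ℝ) ^ 2)
    {f : F[X]} (hf : ∀ x ∈ Set.Icc (-(c : ℝ)) c, 0 < aeval x f) :
    f ∈ preordering F (C d - X ^ 2) := by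
  set a : F := (c + c)⁻¹
  have ha : 0 ≤ (a : ℝ) := by push_cast [a]; exact inv_nonneg.2 (by linarith)
  have hac : C a * (C c + C c) = 1 := C_inv_add_self_mul (by rintro rfl; simp at hc)
  set q := f.comp ((C c + C c) * X - C c)
  have hq : ∀ x ∈ Set.Icc (0 : ℝ) 1, 0 < aeval x q := fun x hx => by
    have hc' : algebraMap F ℝ c = c := rfl
    simp only [q, aeval_comp, map_sub, map_mul, map_add, aeval_X, aeval_C, hc']
    exact hf _ ⟨by nlinarith [hx.1], by nlinarith [hx.2]⟩
  obtain ⟨N, hN, hpos⟩ := exists_bernsteinCoeff_pos_of_aeval q hq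
  have hfq : f = q.comp (C a * (C c + X)) := by
    have hX : ((C c + C c) * X - C c).comp (C a * (C c + X)) = X := by
      simp only [sub_comp, mul_comp, add_comp, C_comp, X_comp]
      linear_combination (C c + X) * hac
    rw [comp_assoc, hX, comp_X]
  rw [hfq, ← sum_bernsteinCoeff_mul hN, Polynomial.sum_comp]
  refine sum_mem fun i hi => ?_
  have hsub : 1 - C a * (C c + X) = C a * (C c - X) := by linear_combination -hac
  simp only [mul_comp, C_comp, pow_comp, X_comp, sub_comp, one_comp, hsub]
  obtain ⟨hplus, hminus⟩ := C_add_X_mem_preordering hc hcd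
  exact mul_mem (mul_mem (C_mem_preordering (hpos i (Nat.lt_succ_iff.1 (mem_range.1 hi))).le)
    (pow_mem (mul_mem (C_mem_preordering ha) hplus) _))
    (pow_mem (mul_mem (C_mem_preordering ha) hminus) _)

theorem mem_preordering_of_pos {d : F} {f : F[X]}
    (hf : ∀ x ∈ Set.Icc (-√(d : ℝ)) √(d : ℝ), 0 < aeval x f) :
    f ∈ preordering F (C d - X ^ 2) := by
  obtain ⟨c, hsc, hc⟩ :=
    exists_rat_gt_forall_pos_on_Icc (Polynomial.continuous_aeval f) (Real.sqrt_nonneg _) hf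
  have hcF : ((c : F) : ℝ) = c := by push_cast; ring
  have hc0 : (0 : ℝ) < c := (Real.sqrt_nonneg _).trans_lt hsc
  refine mem_preordering_of_pos_on_Icc (c := (c : F)) (by rwa [hcF]) ?_ (by rwa [hcF])
  rw [hcF]
  exact (Real.sqrt_lt' hc0).1 hsc

theorem minpoly_eq_X_sq_sub_C {x : ℝ} {d : F} (hx : x ^ 2 = d) (hxF : x ∉ F) :
    minpoly F x = X ^ 2 - C d := by
  refine (minpoly.eq_of_irreducible_of_monic ?_ ?_ (monic_X_pow_sub_C d two_ne_zero)).symm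
  · refine X_pow_sub_C_irreducible_of_prime Nat.prime_two fun b hb => hxF ?_
    have hb' : (x - b) * (x + b) = 0 := by
      have := congrArg ((↑) : F → ℝ) hb
      push_cast at this
      linear_combination hx - this
    rcases mul_eq_zero.1 hb' with h | h
    · rw [sub_eq_zero.1 h]; exact b.2
    · rw [eq_neg_of_add_eq_zero_left h]; exact neg_mem b.2
  · rw [map_sub, map_pow, aeval_X, aeval_C, hx]
    exact sub_self _

theorem minpoly_sq_dvd_of_isLocalMin {f : F[X]} (hf : f ≠ 0) {x₀ : ℝ} (hroot : aeval x₀ f = 0)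
    (hmin : IsLocalMin (fun x => aeval x f) x₀) : minpoly F x₀ ^ 2 ∣ f := by
  have hint : IsIntegral F x₀ := IsAlgebraic.isIntegral ⟨f, hf, hroot⟩
  refine (minpoly.irreducible hint).separable.sq_dvd_of_dvd_of_dvd_derivative
    (minpoly.dvd F x₀ hroot) (minpoly.dvd F x₀ ?_)
  rw [← Polynomial.deriv_aeval]
  exact hmin.deriv_eq_zero

theorem aeval_nonneg_of_aeval_mul_nonneg {p g : F[X]} (hp : p ≠ 0) {a b : ℝ} (hab : a < b)
    (hp0 : ∀ x ∈ Set.Icc a b, 0 ≤ aeval x p) (hpg : ∀ x ∈ Set.Icc a b, 0 ≤ aeval x (p * g)) :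
    ∀ x ∈ Set.Icc a b, 0 ≤ aeval x g := by
  have hR : {x : ℝ | aeval x p = 0}.Countable := by
    simpa only [IsRoot, eval_map_algebraMap] using
      (finite_setOfPred_isRoot (Polynomial.map_ne_zero (f := algebraMap F ℝ) hp)).countable
  refine nonneg_on_Icc_of_nonneg_off_countable (Polynomial.continuous_aeval g) hR hab
    fun x hx hxR => ?_
  have hx' := Set.Ioo_subset_Icc_self hx
  have := hpg x hx'
  rw [map_mul] at this
  exact nonneg_of_mul_nonneg_right this ((hp0 x hx').lt_of_ne' hxR)

theorem exists_preordering_factor {d : F} (hd : 0 < (d : ℝ)) (hirr : √(d : ℝ) ∉ F) {f : F[X]}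
    (hf0 : f ≠ 0) (hf : ∀ x ∈ Set.Icc (-√(d : ℝ)) √(d : ℝ), 0 ≤ aeval x f) {x₀ : ℝ}
    (hx₀ : x₀ ∈ Set.Icc (-√(d : ℝ)) √(d : ℝ)) (hroot : aeval x₀ f = 0) :
    ∃ p g : F[X], f = p * g ∧ p ∈ preordering F (C d - X ^ 2) ∧ 0 < p.natDegree := by
  by_cases hend : x₀ = -√(d : ℝ) ∨ x₀ = √(d : ℝ)
  · have hx₀F : x₀ ∉ F := by
      rcases hend with rfl | rfl
      · exact fun h => hirr (by simpa using neg_mem h)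
      · exact hirr
    have hx₀d : x₀ ^ 2 = d := by
      rcases hend with rfl | rfl <;> simp [Real.sq_sqrt hd.le]
    obtain ⟨g, rfl⟩ := minpoly_eq_X_sq_sub_C hx₀d hx₀F ▸ minpoly.dvd F x₀ hroot
    refine ⟨C d - X ^ 2, -g, by ring, self_mem_preordering _, ?_⟩
    rw [natDegree_sub_eq_right_of_natDegree_lt] <;> simp
  · push Not at hend
    have hmin : IsLocalMin (fun x => aeval x f) x₀ :=
      Filter.eventually_of_mem (Icc_mem_nhds (hx₀.1.lt_of_ne' hend.1) (hx₀.2.lt_of_ne hend.2))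
        fun x hx => by simpa only [hroot] using hf x hx
    obtain ⟨g, rfl⟩ := minpoly_sq_dvd_of_isLocalMin hf0 hroot hmin
    have hint : IsIntegral F x₀ := IsAlgebraic.isIntegral ⟨_, hf0, hroot⟩
    refine ⟨_, g, rfl, mem_preordering_of_mem_sumsOfWeightedSquares
      (sq_mem_sumsOfWeightedSquares _), ?_⟩
    rw [natDegree_pow]
    have := minpoly.natDegree_pos hint
    omega

theorem mem_preordering_of_nonneg {d : F} (hd : 0 < (d : ℝ)) (hirr : √(d : ℝ) ∉ F) {f : F[X]}
    (hf : ∀ x ∈ Set.Icc (-√(d : ℝ)) √(d : ℝ), 0 ≤ aeval x f) :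
    f ∈ preordering F (C d - X ^ 2) := by
  induction hn : f.natDegree using Nat.strong_induction_on generalizing f with
  | _ n ih =>
    by_cases hpos : ∀ x ∈ Set.Icc (-√(d : ℝ)) √(d : ℝ), 0 < aeval x f
    · exact mem_preordering_of_pos hpos
    by_cases hf0 : f = 0
    · rw [hf0]; exact zero_mem _
    push Not at hpos
    obtain ⟨x₀, hx₀, hle⟩ := hpos
    obtain ⟨p, g, rfl, hp, hpdeg⟩ :=
      exists_preordering_factor hd hirr hf0 hf hx₀ (le_antisymm hle (hf x₀ hx₀))
    have hp0 : p ≠ 0 := ne_zero_of_natDegree_gt hpdeg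
    have hdeg : g.natDegree < n := by
      rw [← hn, natDegree_mul hp0 (right_ne_zero_of_mul hf0)]; omega
    have hDnonneg : ∀ x ∈ Set.Icc (-√(d : ℝ)) √(d : ℝ), 0 ≤ aeval x (C d - X ^ 2) := fun x hx => by
      have := (Real.sq_le hd.le).2 hx
      simp only [map_sub, map_pow, aeval_X, aeval_C]
      exact sub_nonneg.2 this
    refine mul_mem hp (ih _ hdeg ?_ rfl)
    exact aeval_nonneg_of_aeval_mul_nonneg hp0 (neg_lt_self (Real.sqrt_pos.2 hd))
      (fun x hx => aeval_nonneg_of_mem_preordering hp (hDnonneg x hx)) hf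

end IntervalPositivstellensatz

theorem stmt5 (F : Subfield ℝ) (d : F) (hd : 0 < (d:ℝ)) (hirr : Real.sqrt (d:ℝ) ∉ F)
    (f : F[X])
    (hf : ∀ x : ℝ, -Real.sqrt (d:ℝ) ≤ x → x ≤ Real.sqrt (d:ℝ) → 0 ≤ pev F f x) :
    ∃ σ₀ σ₁ : F[X], SumWtSq F σ₀ ∧ SumWtSq F σ₁ ∧
      f = σ₀ + σ₁ * (C d - X ^ 2) := by
  obtain ⟨σ₀, hσ₀, σ₁, hσ₁, rfl⟩ :=
    IntervalPositivstellensatz.mem_preordering_of_nonneg hd hirr fun x hx => hf x hx.1 hx.2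
  exact ⟨σ₀, σ₁, IntervalPositivstellensatz.mem_sumsOfWeightedSquares_iff.1 hσ₀,
    IntervalPositivstellensatz.mem_sumsOfWeightedSquares_iff.1 hσ₁, rfl⟩
end

section
/- Let F be a subfield of ℝ, d ∈ F with d > 0 and √d ∉ F, and let a ∈ F with a < −√d. Then x − a lies in the preordering of F[x] generated by d − x²; more precisely x − a = σ₀ + σ₁(d − x²) for sums σ₀, σ₁ of terms t·g², t ∈ F_{≥0}, g ∈ F[x]. -/
open Polynomial

theorem stmt7 (F : Subfield ℝ) (d : F) (hd : 0 < (d:ℝ)) (hirr : Real.sqrt (d:ℝ) ∉ F)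
    (a : F) (ha : (a:ℝ) < -Real.sqrt (d:ℝ)) :
    ∃ σ₀ σ₁ : F[X], SumWtSq F σ₀ ∧ SumWtSq F σ₁ ∧
      X - C a = σ₀ + σ₁ * (C d - X ^ 2) := by
  have hs : (0:ℝ) < Real.sqrt (d:ℝ) := Real.sqrt_pos.mpr hd
  have hA : (a:ℝ) < 0 := lt_trans ha (by linarith)
  have hsq : ((d:ℝ)) < (a:ℝ)^2 := by
    nlinarith [Real.sq_sqrt hd.le, hs.le, ha]
  have ha0 : a + a ≠ 0 := by
    intro h
    have : ((a + a : F) : ℝ) = 0 := by rw [h]; simp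
    push_cast at this
    linarith
  set b : F := -(a + a)⁻¹ with hbdef
  have hb : (a + a) * b = -1 := by
    rw [hbdef, mul_neg, mul_inv_cancel₀ ha0]
  set e : F := -a - b * (a^2 + d) with hedef
  have hbR : ((a:ℝ) + (a:ℝ)) * (b:ℝ) = -1 := by
    have := congrArg (fun x : F => (x : ℝ)) hb
    push_cast at this
    linarith [this]
  have hbnn : (0:ℝ) ≤ (b:ℝ) := by nlinarith
  have henn : (0:ℝ) ≤ (e:ℝ) := by
    have heR : (e:ℝ) = -(a:ℝ) - (b:ℝ) * ((a:ℝ)^2 + (d:ℝ)) := by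
      rw [hedef]; push_cast; ring
    have key : (e:ℝ) * ((a:ℝ) + (a:ℝ)) = (d:ℝ) - (a:ℝ)^2 := by
      rw [heR]; linear_combination (-((a:ℝ)^2 + (d:ℝ))) * hbR
    nlinarith
  refine ⟨C b * (X - C a)^2 + C e * 1^2, C b * 1^2, ?_, ?_, ?_⟩
  · exact ⟨2, ![b, e], ![X - C a, 1], by
      intro i; fin_cases i <;> simpa, by simp [Fin.sum_univ_two]⟩
  · exact ⟨1, ![b], ![1], by intro i; fin_cases i <;> simpa, by simp⟩
  · have hbC : (C a + C a) * C b = (-1 : F[X]) := by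
      rw [← C_add, ← C_mul, hb, C_neg, C_1]
    have heC : (C e : F[X]) = -C a - C b * (C a^2 + C d) := by
      rw [hedef, C_sub, C_neg, C_mul, C_add, C_pow]
    rw [heC]
    linear_combination (X : F[X]) * hbC
end

section
/- Let F be a subfield of ℝ, d ∈ F with d > 0 and √d ∉ F, and K = [√d, ∞) ⊂ ℝ. Then Pos(K) = {f ∈ F[x] : f ≥ 0 on K} is not a finitely generated preordering of F[x]; i.e., there is no finite set f₁,…,f_s ∈ Pos(K) such that every element of Pos(K) lies in the preordering ∑_{e∈{0,1}^s} F_{≥0} F[x]² f^e generated by them. -/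
/-! If `g₁, …, g_s` generated `Pos K`, take `f = (X - a)(X² - d)` with `a ∈ ℚ` just below `√d`.
In a representation `f = ∑ σ_e G_e` (`G_e` the products of generators) every term is nonnegative
on `K`, hence has degree at most 3 and vanishes at `√d`. As `X² - d` is the minimal polynomial of
`√d` over `F`, a weighted sum of squares vanishing at `√d` is divisible by `(X² - d)²`; so for each
nonzero term `X² - d ∣ G_e`, `σ_e` is a nonnegative constant `t_e`, and the cofactor
`w_e = G_e / (X² - d)` is linear and positive at `√d`. Cancelling `X² - d` gives
`X - a = ∑ t_e w_e`, and comparing the coefficient of `X` with the value at `√d` yields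
`1 ≤ M (√d - a)` for a constant `M` depending only on the generators: impossible once `a` is
close enough to `√d`. -/

open Polynomial

/-- membership in the preordering of `F[x]` generated by `g 0, …, g (s-1)`. -/
def InPre (F : Subfield ℝ) {s : ℕ} (g : Fin s → F[X]) (f : F[X]) : Prop :=
  ∃ σ : (Fin s → Bool) → F[X], (∀ e, SumWtSq F (σ e)) ∧
    f = ∑ e : Fin s → Bool, σ e * ∏ i, (if e i then g i else 1)

open Filter

namespace Polynomial

theorem leadingCoeff_nonneg_of_eventually_nonneg {P : ℝ[X]}
    (h : ∀ᶠ x in atTop, 0 ≤ P.eval x) : 0 ≤ P.leadingCoeff := by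
  by_contra! hneg
  rcases le_or_gt P.degree 0 with hdeg | hdeg
  · obtain ⟨x, hx⟩ := h.exists
    rw [eq_C_of_degree_le_zero hdeg] at hx hneg
    simp only [eval_C, leadingCoeff_C] at hx hneg
    linarith
  · obtain ⟨x, hx, hx'⟩ :=
      (h.and ((tendsto_atBot_of_leadingCoeff_nonpos P hdeg hneg.le).eventually_lt_atBot 0)).exists
    linarith

theorem natDegree_le_of_eventually_nonneg_of_le {p q : ℝ[X]}
    (hq : ∀ᶠ x in atTop, 0 ≤ q.eval x) (hqp : ∀ᶠ x in atTop, q.eval x ≤ p.eval x) :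
    q.natDegree ≤ p.natDegree := by
  by_contra! hlt
  have hq0 : q ≠ 0 := by rintro rfl; simp at hlt
  have hlc := leadingCoeff_nonneg_of_eventually_nonneg (P := p - q)
    (hqp.mono fun x hx => by simpa using hx)
  rw [leadingCoeff_sub_of_degree_lt' (degree_lt_degree hlt)] at hlc
  exact hq0 (leadingCoeff_eq_zero.mp
    (le_antisymm (neg_nonneg.mp hlc) (leadingCoeff_nonneg_of_eventually_nonneg hq)))

theorem eval_nonneg_of_forall_gt {P : ℝ[X]} {r : ℝ} (h : ∀ x, r < x → 0 ≤ P.eval x) :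
    0 ≤ P.eval r :=
  ge_of_tendsto ((P.continuous.tendsto r).mono_left (nhdsWithin_le_nhds (s := Set.Ioi r)))
    (eventually_mem_nhdsWithin.mono h)

theorem coeff_one_eq_zero_of_forall_nonneg {q : ℝ[X]} (hdeg : q.natDegree ≤ 1)
    (h : ∀ x, 0 ≤ q.eval x) : q.coeff 1 = 0 := by
  by_contra hne
  have hlin : ∀ x, q.eval x = q.coeff 1 * x + q.coeff 0 := fun x => by
    conv_lhs => rw [eq_X_add_C_of_natDegree_le_one hdeg]
    simp
  have hval := h ((-1 - q.coeff 0) / q.coeff 1)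
  rw [hlin, mul_div_cancel₀ _ hne] at hval
  linarith

end Polynomial

variable {F : Subfield ℝ}

theorem pev_eq_eval_map (f : F[X]) (x : ℝ) : pev F f x = (f.map (algebraMap F ℝ)).eval x := by
  rw [pev, aeval_def, eval_map]

theorem pos_of_sqrt_notMem {d : F} (hirr : √(d : ℝ) ∉ F) : 0 < (d : ℝ) := by
  by_contra! hd
  exact hirr (Real.sqrt_eq_zero'.mpr hd ▸ zero_mem F)

theorem pev_mul (a b : F[X]) (x : ℝ) : pev F (a * b) x = pev F a x * pev F b x :=
  map_mul (aeval x) a b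

theorem pev_sum {ι : Type*} (s : Finset ι) (φ : ι → F[X]) (x : ℝ) :
    pev F (∑ j ∈ s, φ j) x = ∑ j ∈ s, pev F (φ j) x :=
  map_sum (aeval x) φ s

theorem pev_X_sub_C (a : F) (x : ℝ) : pev F (X - C a) x = x - a := by
  simp [pev, Algebra.algebraMap_ofSubsemiring_apply]

theorem pev_X_sq_sub_C (d : F) (x : ℝ) : pev F (X ^ 2 - C d) x = x ^ 2 - d := by
  simp [pev, Algebra.algebraMap_ofSubsemiring_apply]

theorem minpoly_sqrt {d : F} (hirr : √(d : ℝ) ∉ F) :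
    minpoly F √(d : ℝ) = X ^ 2 - C d := by
  refine (minpoly.eq_of_irreducible_of_monic ?_ ?_ (monic_X_pow_sub_C d two_ne_zero)).symm
  · refine X_pow_sub_C_irreducible_of_prime Nat.prime_two fun b hb => hirr ?_
    rw [← hb, SubmonoidClass.coe_pow, Real.sqrt_sq_eq_abs]
    exact abs_by_cases (· ∈ F) b.2 (neg_mem b.2)
  · exact (pev_X_sq_sub_C d _).trans
      (by rw [Real.sq_sqrt (pos_of_sqrt_notMem hirr).le, sub_self])

theorem X_sq_sub_C_dvd_of_pev_sqrt_eq_zero {d : F} (hirr : √(d : ℝ) ∉ F)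
    {q : F[X]} (hq : pev F q √(d : ℝ) = 0) : X ^ 2 - C d ∣ q :=
  minpoly_sqrt hirr ▸ minpoly.dvd F _ hq

namespace SumWtSq

theorem pev_nonneg {σ : F[X]} (h : SumWtSq F σ) (x : ℝ) : 0 ≤ pev F σ x := by
  obtain ⟨n, t, g, ht, rfl⟩ := h
  simp only [pev, map_sum, map_mul, map_pow, aeval_C]
  exact Finset.sum_nonneg fun i _ => mul_nonneg (ht i) (sq_nonneg _)

theorem sq_dvd_of_pev_sqrt_eq_zero {d : F} (hirr : √(d : ℝ) ∉ F)
    {σ : F[X]} (h : SumWtSq F σ) (hσ : pev F σ √(d : ℝ) = 0) : (X ^ 2 - C d) ^ 2 ∣ σ := by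
  obtain ⟨n, t, g, ht, rfl⟩ := h
  simp only [pev, map_sum, map_mul, map_pow, aeval_C] at hσ
  have hterm := (Finset.sum_eq_zero_iff_of_nonneg fun i _ => mul_nonneg (ht i) (sq_nonneg _)).mp hσ
  refine Finset.dvd_sum fun i hi => ?_
  rcases mul_eq_zero.mp (hterm i hi) with ht0 | hg0
  · simp [show t i = 0 from Subtype.ext ht0]
  · obtain ⟨c, hc⟩ :=
      X_sq_sub_C_dvd_of_pev_sqrt_eq_zero hirr ((pow_eq_zero_iff two_ne_zero).mp hg0)
    exact ⟨C (t i) * c ^ 2, by rw [hc]; ring⟩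

theorem eq_C_of_natDegree_le_one {σ : F[X]} (h : SumWtSq F σ) (hdeg : σ.natDegree ≤ 1) :
    σ = C (σ.coeff 0) ∧ 0 ≤ (σ.coeff 0 : ℝ) := by
  have hc1 : σ.coeff 1 = 0 := by
    have := coeff_one_eq_zero_of_forall_nonneg (q := σ.map (algebraMap F ℝ))
      (by rwa [natDegree_map]) fun x => pev_eq_eval_map σ x ▸ h.pev_nonneg x
    simpa using this
  have hσ : σ = C (σ.coeff 0) := by
    simpa [hc1] using eq_X_add_C_of_natDegree_le_one hdeg
  refine ⟨hσ, ?_⟩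
  have := h.pev_nonneg 0
  rwa [hσ, pev, aeval_C] at this

end SumWtSq

theorem pev_eq_zero_of_sum_eq_zero {ι : Type*} {s : Finset ι} {φ : ι → F[X]} {r : ℝ}
    (hφ : ∀ i ∈ s, 0 ≤ pev F (φ i) r) (h : pev F (∑ j ∈ s, φ j) r = 0) {i : ι} (hi : i ∈ s) :
    pev F (φ i) r = 0 := by
  rw [pev_sum] at h
  exact (Finset.sum_eq_zero_iff_of_nonneg hφ).mp h i hi

theorem natDegree_le_natDegree_sum {ι : Type*} {s : Finset ι} {φ : ι → F[X]} {r : ℝ}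
    (hφ : ∀ i ∈ s, ∀ x, r ≤ x → 0 ≤ pev F (φ i) x) {i : ι} (hi : i ∈ s) :
    (φ i).natDegree ≤ (∑ j ∈ s, φ j).natDegree := by
  rw [← natDegree_map (p := φ i) (algebraMap F ℝ),
    ← natDegree_map (p := ∑ j ∈ s, φ j) (algebraMap F ℝ)]
  refine natDegree_le_of_eventually_nonneg_of_le ?_ ?_ <;>
    filter_upwards [eventually_ge_atTop r] with x hx <;>
    simp only [← pev_eq_eval_map]
  · exact hφ i hi x hx
  · rw [pev_sum]
    exact Finset.single_le_sum (f := fun j => pev F (φ j) x) (fun j hj => hφ j hj x hx) hi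

theorem pev_prod_ite_nonneg {ι : Type*} (s : Finset ι) (g : ι → F[X]) (e : ι → Bool) {x : ℝ}
    (hg : ∀ i ∈ s, 0 ≤ pev F (g i) x) : 0 ≤ pev F (∏ i ∈ s, if e i then g i else 1) x := by
  rw [pev, map_prod]
  refine Finset.prod_nonneg fun i hi => ?_
  split_ifs
  · exact hg i hi
  · simp

theorem sum_mul_le_mul_sum {ι : Type*} (s : Finset ι) {t u v : ι → ℝ} (ht : ∀ i ∈ s, 0 ≤ t i)
    (htv : ∀ i ∈ s, t i = 0 ∨ 0 < v i) :
    ∑ i ∈ s, t i * u i ≤ (∑ i ∈ s, |u i / v i|) * ∑ i ∈ s, t i * v i := by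
  rw [Finset.mul_sum]
  refine Finset.sum_le_sum fun i hi => ?_
  rcases htv i hi with h0 | hv
  · simp [h0]
  have hu : u i ≤ (∑ j ∈ s, |u j / v j|) * v i :=
    calc u i = u i / v i * v i := (div_mul_cancel₀ _ hv.ne').symm
      _ ≤ |u i / v i| * v i := mul_le_mul_of_nonneg_right (le_abs_self _) hv.le
      _ ≤ (∑ j ∈ s, |u j / v j|) * v i :=
        mul_le_mul_of_nonneg_right
          (Finset.single_le_sum (f := fun j => |u j / v j|) (fun j _ => abs_nonneg _) hi) hv.le
  nlinarith [ht i hi]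

theorem exists_lt_mul_sub_lt_one (M r : ℝ) : ∃ a : F, (a : ℝ) < r ∧ M * (r - a) < 1 := by
  obtain ⟨q, hq, hqr⟩ := exists_rat_btwn (sub_lt_self r (by positivity : 0 < 1 / (|M| + 1)))
  refine ⟨⟨q, SubfieldClass.ratCast_mem F q⟩, hqr, ?_⟩
  have hrq : r - q < 1 / (|M| + 1) := by linarith
  rw [lt_div_iff₀ (by positivity)] at hrq
  nlinarith [le_abs_self M, abs_nonneg M]

theorem one_le_mul_of_X_sub_C_eq_sum {ι : Type*} (s : Finset ι) {a : F} {r : ℝ} {t : ι → F}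
    {w : ι → F[X]} (ht : ∀ i ∈ s, 0 ≤ (t i : ℝ)) (htw : ∀ i ∈ s, t i = 0 ∨ 0 < pev F (w i) r)
    (h : X - C a = ∑ i ∈ s, C (t i) * w i) :
    1 ≤ (∑ i ∈ s, |((w i).coeff 1 : ℝ) / pev F (w i) r|) * (r - a) := by
  have hcoeff : (1 : ℝ) = ∑ i ∈ s, (t i : ℝ) * ((w i).coeff 1 : ℝ) := by
    have := congrArg (fun q : F[X] => ((q.coeff 1 : F) : ℝ)) h
    simpa using this
  have hval : r - a = ∑ i ∈ s, (t i : ℝ) * pev F (w i) r := by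
    have := congrArg (fun q : F[X] => pev F q r) h
    simpa [pev, Algebra.algebraMap_ofSubsemiring_apply] using this
  rw [hcoeff, hval]
  exact sum_mul_le_mul_sum s ht fun i hi => (htw i hi).imp_left fun h0 => by simp [h0]

theorem X_sq_sub_C_dvd_of_natDegree_mul_le_three {d : F} (hirr : √(d : ℝ) ∉ F) {σ G : F[X]}
    (hσ : SumWtSq F σ) (hσG : σ * G ≠ 0) (hzero : pev F (σ * G) √(d : ℝ) = 0)
    (hdeg : (σ * G).natDegree ≤ 3) : X ^ 2 - C d ∣ G := by
  have hσ0 := left_ne_zero_of_mul hσG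
  refine X_sq_sub_C_dvd_of_pev_sqrt_eq_zero hirr (by_contra fun hG => ?_)
  rw [pev_mul] at hzero
  have hσ4 := natDegree_le_of_dvd
    (hσ.sq_dvd_of_pev_sqrt_eq_zero hirr ((mul_eq_zero.mp hzero).resolve_right hG)) hσ0
  rw [natDegree_pow, natDegree_X_pow_sub_C] at hσ4
  rw [natDegree_mul hσ0 (right_ne_zero_of_mul hσG)] at hdeg
  omega

theorem pev_sqrt_pos_of_nonneg_mul {d : F} (hirr : √(d : ℝ) ∉ F) {w : F[X]} (hw : w ≠ 0)
    (hdeg : w.natDegree ≤ 1) (hnonneg : ∀ x, √(d : ℝ) ≤ x → 0 ≤ pev F ((X ^ 2 - C d) * w) x) :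
    0 < pev F w √(d : ℝ) := by
  have hd := pos_of_sqrt_notMem hirr
  have hle : 0 ≤ pev F w √(d : ℝ) := by
    rw [pev_eq_eval_map]
    refine eval_nonneg_of_forall_gt fun x hx => ?_
    have hp : 0 < pev F (X ^ 2 - C d) x := by
      rw [pev_X_sq_sub_C]
      nlinarith [Real.sq_sqrt hd.le, Real.sqrt_nonneg (d : ℝ)]
    have hpw := hnonneg x hx.le
    rw [pev_mul] at hpw
    exact pev_eq_eval_map w x ▸ nonneg_of_mul_nonneg_right hpw hp
  refine hle.lt_of_ne fun h => ?_
  have := natDegree_le_of_dvd (X_sq_sub_C_dvd_of_pev_sqrt_eq_zero hirr h.symm) hw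
  rw [natDegree_X_pow_sub_C] at this
  omega

theorem exists_eq_C_mul_divByMonic {d : F} (hirr : √(d : ℝ) ∉ F) {σ G : F[X]}
    (hσ : SumWtSq F σ) (hG : ∀ x, √(d : ℝ) ≤ x → 0 ≤ pev F G x)
    (hzero : pev F (σ * G) √(d : ℝ) = 0) (hdeg : (σ * G).natDegree ≤ 3) :
    ∃ t : F, 0 ≤ (t : ℝ) ∧ σ * G = (X ^ 2 - C d) * (C t * (G /ₘ (X ^ 2 - C d))) ∧
      (t = 0 ∨ 0 < pev F (G /ₘ (X ^ 2 - C d)) √(d : ℝ)) := by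
  by_cases hσG : σ * G = 0
  · exact ⟨0, le_rfl, by simp [hσG], Or.inl rfl⟩
  have hmon : (X ^ 2 - C d).Monic := monic_X_pow_sub_C d two_ne_zero
  set w := G /ₘ (X ^ 2 - C d)
  have hGw : G = (X ^ 2 - C d) * w := by
    have h := modByMonic_add_div G (X ^ 2 - C d)
    rwa [(modByMonic_eq_zero_iff_dvd hmon).mpr
      (X_sq_sub_C_dvd_of_natDegree_mul_le_three hirr hσ hσG hzero hdeg), zero_add, eq_comm] at h
  have hσ0 := left_ne_zero_of_mul hσG
  have hw0 : w ≠ 0 := fun h => hσG (by rw [hGw, h, mul_zero, mul_zero])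
  rw [hGw, natDegree_mul hσ0 (mul_ne_zero hmon.ne_zero hw0), natDegree_mul hmon.ne_zero hw0,
    natDegree_X_pow_sub_C] at hdeg
  obtain ⟨hσC, ht⟩ := hσ.eq_C_of_natDegree_le_one (by omega)
  refine ⟨σ.coeff 0, ht, ?_, Or.inr (pev_sqrt_pos_of_nonneg_mul hirr hw0 (by omega) (hGw ▸ hG))⟩
  conv_lhs => rw [hσC, hGw]
  ring

theorem stmt8_general (F : Subfield ℝ) (d : F) (hirr : Real.sqrt (d:ℝ) ∉ F) :
    ¬ ∃ (s : ℕ) (g : Fin s → F[X]),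
      (∀ i, ∀ x : ℝ, Real.sqrt (d:ℝ) ≤ x → 0 ≤ pev F (g i) x) ∧
      (∀ f : F[X], (∀ x : ℝ, Real.sqrt (d:ℝ) ≤ x → 0 ≤ pev F f x) → InPre F g f) := by
  rintro ⟨s, g, hg, hrep⟩
  have hd := pos_of_sqrt_notMem hirr
  set r := √(d : ℝ)
  set p : F[X] := X ^ 2 - C d
  set w : (Fin s → Bool) → F[X] := fun e => (∏ i, if e i then g i else 1) /ₘ p
  obtain ⟨a, har, haM⟩ :=
    exists_lt_mul_sub_lt_one (F := F) (∑ e, |((w e).coeff 1 : ℝ) / pev F (w e) r|) r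
  have hf : ∀ x, r ≤ x → 0 ≤ pev F ((X - C a) * p) x := fun x hx => by
    rw [pev_mul, pev_X_sub_C, pev_X_sq_sub_C]
    exact mul_nonneg (by linarith) (by nlinarith [Real.sq_sqrt hd.le, Real.sqrt_nonneg (d : ℝ)])
  have hfr : pev F ((X - C a) * p) r = 0 := by
    rw [pev_mul, pev_X_sq_sub_C, Real.sq_sqrt hd.le, sub_self, mul_zero]
  have hfdeg : ((X - C a) * p).natDegree ≤ 3 :=
    natDegree_mul_le.trans (by rw [natDegree_X_sub_C, natDegree_X_pow_sub_C])
  obtain ⟨σ, hσ, hfσ⟩ := hrep _ hf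
  have hterm_nonneg : ∀ e ∈ Finset.univ, ∀ x, r ≤ x →
      0 ≤ pev F (σ e * ∏ i, if e i then g i else 1) x := fun e _ x hx => by
    rw [pev_mul]
    exact mul_nonneg ((hσ e).pev_nonneg x)
      (pev_prod_ite_nonneg _ g e fun i _ => hg i x hx)
  choose t ht0 hteq htw using fun e => exists_eq_C_mul_divByMonic hirr (hσ e)
    (fun x hx => pev_prod_ite_nonneg _ g e fun i _ => hg i x hx)
    (pev_eq_zero_of_sum_eq_zero (fun e he => hterm_nonneg e he r le_rfl) (hfσ ▸ hfr)
      (Finset.mem_univ e))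
    ((natDegree_le_natDegree_sum hterm_nonneg (Finset.mem_univ e)).trans (hfσ ▸ hfdeg))
  have hlin : X - C a = ∑ e, C (t e) * w e := by
    refine mul_left_cancel₀ (monic_X_pow_sub_C d two_ne_zero).ne_zero ?_
    rw [Finset.mul_sum, ← Finset.sum_congr rfl fun e _ => hteq e, ← hfσ, mul_comm]
  exact haM.not_ge (one_le_mul_of_X_sub_C_eq_sum _ (fun e _ => ht0 e) (fun e _ => htw e) hlin)

theorem stmt8 (F : Subfield ℝ) (d : F) (hd : 0 < (d:ℝ)) (hirr : Real.sqrt (d:ℝ) ∉ F) :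
    ¬ ∃ (s : ℕ) (g : Fin s → F[X]),
      (∀ i, ∀ x : ℝ, Real.sqrt (d:ℝ) ≤ x → 0 ≤ pev F (g i) x) ∧
      (∀ f : F[X], (∀ x : ℝ, Real.sqrt (d:ℝ) ≤ x → 0 ≤ pev F f x) → InPre F g f) :=
  stmt8_general F d hirr
end

section
/- Let F be a subfield of ℝ and let K ⊂ ℝ be a noncompact basic closed semi-algebraic set containing a ray [a,∞) with a ∈ F. Suppose c ∈ ∂K is algebraic over F with [F(c):F] ≥ 3. Then Pos(K) = {f ∈ F[x] : f ≥ 0 on K} is not a finitely generated preordering of F[x]. -/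
open Polynomial

/-!
If `Pos(K)` were the preordering generated by `g`, a quadratic `f ≥ 0` on `K` could be written
as `∑ σₑ gᵉ`. Every term is nonnegative on `K`, hence bounded by `f` on the ray, so its degree is at
most `2`; thus `σₑ` is a nonnegative constant `τₑ` whenever `deg gᵉ ∈ {1, 2}`, and such a `gᵉ` is
positive at `c` because `c` has degree `≥ 3` over `F`. Evaluating at `c ∈ K` gives
`τₑ ≤ f(c) / gᵉ(c)`, whence `f(m) ≥ -B(m) f(c)` with `B(m)` independent of `f`.
Since `K` is basic closed and `c ∈ ∂K`, `K` misses the open interval between `c` and some rational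
`r`. For `f = (x - r)(x - q)` with rational `q → c` inside that interval, `f(c) → 0` while
`f(m) → (m - r)(m - c) < 0` for `m` between `r` and `c`: a contradiction.
-/

open Filter Topology

theorem leadingCoeff_pos_of_eventually_nonneg {P : ℝ[X]} (hP : P ≠ 0)
    (h : ∀ᶠ x in atTop, 0 ≤ P.eval x) : 0 < P.leadingCoeff := by
  by_contra! hlc
  have hneg : ∀ᶠ x in atTop, P.eval x < 0 := by
    rcases lt_or_ge 0 P.degree with hdeg | hdeg
    · exact (P.tendsto_atBot_of_leadingCoeff_nonpos hdeg hlc).eventually_lt_atBot 0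
    · have hC : P = C P.leadingCoeff := by
        rw [leadingCoeff, natDegree_eq_zero_iff_degree_le_zero.mpr hdeg]
        exact eq_C_of_degree_le_zero hdeg
      rw [hC]
      exact .of_forall fun x => by
        simpa using lt_of_le_of_ne hlc (leadingCoeff_ne_zero.mpr hP)
  obtain ⟨x, hx0, hxneg⟩ := (h.and hneg).exists
  exact hxneg.not_ge hx0

theorem natDegree_le_of_eventually_nonneg_of_le {P Q : ℝ[X]} (hP : P ≠ 0)
    (h0 : ∀ᶠ x in atTop, 0 ≤ P.eval x) (hle : ∀ᶠ x in atTop, P.eval x ≤ Q.eval x) :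
    P.natDegree ≤ Q.natDegree := by
  by_contra! hlt
  have hQP : Q - P ≠ 0 := sub_ne_zero.mpr fun h => (h ▸ hlt).false
  have hlc : (Q - P).leadingCoeff = -P.leadingCoeff := by
    rw [← neg_sub, leadingCoeff_neg, leadingCoeff_sub_of_degree_lt (degree_lt_degree hlt)]
  have := leadingCoeff_pos_of_eventually_nonneg hQP (hle.mono fun x hx => by simpa using hx)
  linarith [leadingCoeff_pos_of_eventually_nonneg hP h0]

theorem eq_C_of_nonneg_of_natDegree_le_one {P : ℝ[X]} (h : ∀ x, 0 ≤ P.eval x)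
    (hd : P.natDegree ≤ 1) : P = C (P.coeff 0) := by
  have hP := eq_X_add_C_of_natDegree_le_one hd
  by_cases h1 : P.coeff 1 = 0
  · simpa [h1] using hP
  · have heval : ∀ x, P.eval x = P.coeff 1 * x + P.coeff 0 := fun x => by
      conv_lhs => rw [hP]
      simp
    have := h ((-1 - P.coeff 0) / P.coeff 1)
    rw [heval, mul_div_cancel₀ _ h1] at this
    linarith

section DegreeTwo

variable {K : Set ℝ} {a c : ℝ}

/- If `G.eval c = 0` the factor `|G.eval m| / G.eval c` is `0`; the hypotheses then force
`σ * G = 0`. -/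
theorem neg_mul_le_eval_mul {σ G f : ℝ[X]} (hray : Set.Ici a ⊆ K) (hcK : c ∈ K)
    (hσ : ∀ x, 0 ≤ σ.eval x) (hG : ∀ x ∈ K, 0 ≤ G.eval x)
    (hGc : G ≠ 0 → G.eval c = 0 → 3 ≤ G.natDegree) (hf : f.natDegree ≤ 2)
    (hle : ∀ x ∈ K, σ.eval x * G.eval x ≤ f.eval x) (m : ℝ) :
    -(|G.eval m| / G.eval c * f.eval c) ≤ σ.eval m * G.eval m := by
  have hfc : 0 ≤ f.eval c := (mul_nonneg (hσ c) (hG c hcK)).trans (hle c hcK)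
  have hlhs : -(|G.eval m| / G.eval c * f.eval c) ≤ 0 :=
    neg_nonpos.mpr (mul_nonneg (div_nonneg (abs_nonneg _) (hG c hcK)) hfc)
  by_cases hσG : σ * G = 0
  · simpa [← eval_mul, hσG] using hlhs
  have hdeg : σ.natDegree + G.natDegree ≤ 2 := by
    have hK : ∀ᶠ x in atTop, x ∈ K := (eventually_ge_atTop a).mono fun x hx => hray hx
    rw [← natDegree_mul (left_ne_zero_of_mul hσG) (right_ne_zero_of_mul hσG)]
    refine (natDegree_le_of_eventually_nonneg_of_le hσG ?_ ?_).trans hf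
    · exact hK.mono fun x hx => by simpa using mul_nonneg (hσ x) (hG x hx)
    · exact hK.mono fun x hx => by simpa using hle x hx
  rcases Nat.eq_zero_or_pos G.natDegree with hG0 | hG0
  · refine hlhs.trans (mul_nonneg (hσ m) ?_)
    rw [eq_C_of_natDegree_eq_zero hG0] at hG ⊢
    simpa using hG c hcK
  have hGc_pos : 0 < G.eval c := (hG c hcK).lt_of_ne fun h =>
    (hGc (right_ne_zero_of_mul hσG) h.symm).not_gt (by omega)
  have hσC := eq_C_of_nonneg_of_natDegree_le_one hσ (by omega)
  set τ := σ.coeff 0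
  have hτ : 0 ≤ τ := by simpa [hσC] using hσ 0
  have hτc : τ ≤ f.eval c / G.eval c := by
    rw [le_div_iff₀ hGc_pos]
    simpa [hσC] using hle c hcK
  rw [hσC, eval_C]
  calc -(|G.eval m| / G.eval c * f.eval c) = -(f.eval c / G.eval c) * |G.eval m| := by ring
    _ ≤ -τ * |G.eval m| := by gcongr
    _ ≤ τ * G.eval m := by nlinarith [neg_abs_le (G.eval m)]

theorem neg_mul_le_eval_of_eq_sum {ι : Type*} [Fintype ι] {σ G : ι → ℝ[X]} {f : ℝ[X]}
    (hray : Set.Ici a ⊆ K) (hcK : c ∈ K) (hσ : ∀ i x, 0 ≤ (σ i).eval x)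
    (hG : ∀ i, ∀ x ∈ K, 0 ≤ (G i).eval x)
    (hGc : ∀ i, G i ≠ 0 → (G i).eval c = 0 → 3 ≤ (G i).natDegree) (hf : f.natDegree ≤ 2)
    (hsum : f = ∑ i, σ i * G i) (m : ℝ) :
    -((∑ i, |(G i).eval m| / (G i).eval c) * f.eval c) ≤ f.eval m := by
  have heval : ∀ x, f.eval x = ∑ i, (σ i).eval x * (G i).eval x := by
    simp [hsum, eval_finsetSum]
  rw [Finset.sum_mul, ← Finset.sum_neg_distrib, heval m]
  refine Finset.sum_le_sum fun i _ =>
    neg_mul_le_eval_mul hray hcK (hσ i) (hG i) (hGc i) hf (fun x hx => ?_) m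
  rw [heval x]
  exact Finset.single_le_sum (f := fun j => (σ j).eval x * (G j).eval x)
    (fun j _ => mul_nonneg (hσ j x) (hG j x hx)) (Finset.mem_univ i)

end DegreeTwo

section BasicClosed

variable {ι : Type*} {S : ι → ℝ[X]}

theorem isClosed_setOf_forall_eval_nonneg (S : ι → ℝ[X]) :
    IsClosed {x : ℝ | ∀ i, 0 ≤ (S i).eval x} := by
  simp only [Set.ofPred_forall]
  exact isClosed_iInter fun i => isClosed_le continuous_const (S i).continuous

theorem subset_or_disjoint_of_isPreconnected {I : Set ℝ} (hI : IsPreconnected I)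
    (hroots : ∀ i, ∀ x ∈ I, x ∉ (S i).roots) :
    I ⊆ {x | ∀ i, 0 ≤ (S i).eval x} ∨ Disjoint I {x | ∀ i, 0 ≤ (S i).eval x} := by
  by_contra! h
  obtain ⟨⟨x, hxI, hxK⟩, ⟨y, hyI, hyK⟩⟩ := And.intro (Set.not_subset.mp h.1)
    (Set.not_disjoint_iff.mp h.2)
  obtain ⟨i, hi⟩ : ∃ i, (S i).eval x < 0 := by simpa using hxK
  obtain ⟨z, hzI, hz⟩ := hI.intermediate_value hxI hyI (S i).continuous.continuousOn
    ⟨hi.le, hyK i⟩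
  refine hroots i z hzI (mem_roots'.mpr ⟨fun h0 => ?_, hz⟩)
  simp [h0] at hi

theorem exists_rat_disjoint_uIoo_of_mem_frontier [Finite ι] {c : ℝ}
    (hc : c ∈ frontier {x | ∀ i, 0 ≤ (S i).eval x}) :
    ∃ r : ℚ, (r : ℝ) ≠ c ∧ Disjoint (Set.uIoo (r : ℝ) c) {x | ∀ i, 0 ≤ (S i).eval x} := by
  set K := {x : ℝ | ∀ i, 0 ≤ (S i).eval x}
  have hroots : {x | ∀ i, x ∉ (S i).roots} ∈ 𝓝[≠] c := by
    have hfin : (⋃ i, ((S i).roots.toFinset : Set ℝ)).Finite :=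
      Set.finite_iUnion fun i => Finset.finite_toSet _
    have hcompl : {x | ∀ i, x ∉ (S i).roots} = (⋃ i, ((S i).roots.toFinset : Set ℝ))ᶜ := by
      ext; simp
    exact hcompl ▸ nhdsNE_le_cofinite c hfin.compl_mem_cofinite
  have hside : ∀ I, IsPreconnected I → I ⊆ {x | ∀ i, x ∉ (S i).roots} → I ⊆ K ∨ Disjoint I K :=
    fun I hI hIr => subset_or_disjoint_of_isPreconnected hI fun i x hx => hIr hx i
  obtain ⟨l, hlc : l < c, hl⟩ := mem_nhdsLT_iff_exists_Ioo_subset.mp (nhdsLT_le_nhdsNE c hroots)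
  obtain ⟨u, hcu : c < u, hu⟩ := mem_nhdsGT_iff_exists_Ioo_subset.mp (nhdsGT_le_nhdsNE c hroots)
  rcases hside _ isPreconnected_Ioo hl with hL | hL
  · rcases hside _ isPreconnected_Ioo hu with hR | hR
    · refine absurd (mem_interior.mpr ⟨Set.Ioo l u, fun y hy => ?_, isOpen_Ioo, hlc, hcu⟩) hc.2
      rcases lt_trichotomy y c with hyc | rfl | hyc
      · exact hL ⟨hy.1, hyc⟩
      · exact (isClosed_setOf_forall_eval_nonneg S).frontier_subset hc
      · exact hR ⟨hyc, hy.2⟩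
    · obtain ⟨r, hcr, hru⟩ := exists_rat_btwn hcu
      refine ⟨r, hcr.ne', hR.mono_left ?_⟩
      rw [Set.uIoo_of_gt hcr]
      exact Set.Ioo_subset_Ioo_right hru.le
  · obtain ⟨r, hlr, hrc⟩ := exists_rat_btwn hlc
    refine ⟨r, hrc.ne, hL.mono_left ?_⟩
    rw [Set.uIoo_of_lt hrc]
    exact Set.Ioo_subset_Ioo_left hlr.le

end BasicClosed

theorem mul_sub_nonneg_of_notMem_uIoo {x r c : ℝ} (h : x ∉ Set.uIoo r c) :
    0 ≤ (x - r) * (x - c) := by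
  simp only [Set.uIoo, Set.mem_Ioo, not_and_or, not_lt] at h
  rcases le_total r c with hrc | hcr
  · simp only [inf_of_le_left hrc, sup_of_le_right hrc] at h
    rcases h with h | h <;> nlinarith
  · simp only [inf_of_le_right hcr, sup_of_le_left hcr] at h
    rcases h with h | h <;> nlinarith

theorem exists_rat_mem_uIoo_of_continuousAt {φ : ℝ → ℝ} {r c : ℝ} (hφ : ContinuousAt φ c)
    (hφc : φ c < 0) (hrc : r ≠ c) : ∃ q : ℚ, (q : ℝ) ∈ Set.uIoo r c ∧ φ q < 0 := by
  obtain ⟨ε, hε, hball⟩ := Metric.eventually_nhds_iff.mp (hφ.eventually_lt continuousAt_const hφc)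
  have hnear : ∀ y : ℝ, |y - c| < ε → φ y < 0 := fun y hy => hball (by rwa [Real.dist_eq])
  rcases hrc.lt_or_gt with hrc | hcr
  · obtain ⟨q, hq1, hq2⟩ := exists_rat_btwn (max_lt hrc (sub_lt_self c hε))
    refine ⟨q, Set.mem_uIoo_of_lt (le_max_left _ _ |>.trans_lt hq1) hq2, hnear q ?_⟩
    rw [abs_sub_lt_iff]
    constructor <;> linarith [le_max_right r (c - ε)]
  · obtain ⟨q, hq1, hq2⟩ := exists_rat_btwn (lt_min hcr (lt_add_of_pos_right c hε))
    refine ⟨q, Set.mem_uIoo_of_gt hq1 (hq2.trans_le (min_le_left _ _)), hnear q ?_⟩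
    rw [abs_sub_lt_iff]
    constructor <;> linarith [min_le_right r (c + ε)]

section Preordering

variable {F : Subfield ℝ}

theorem pev_eq_eval (p : F[X]) (x : ℝ) : pev F p x = (p.map (algebraMap F ℝ)).eval x := by
  simp [pev, aeval_def, eval_map]

theorem SumWtSq.pev_nonneg_s9 {σ : F[X]} (h : SumWtSq F σ) (x : ℝ) : 0 ≤ pev F σ x := by
  obtain ⟨n, t, g, ht, rfl⟩ := h
  simp only [pev, map_sum, map_mul, map_pow, aeval_C]
  exact Finset.sum_nonneg fun i _ => mul_nonneg (ht i) (sq_nonneg _)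

/-- The product `gᵉ = g₁^{e₁} ⋯ g_s^{e_s}` in the definition of the preordering. -/
noncomputable def genPow {s : ℕ} (g : Fin s → F[X]) (e : Fin s → Bool) : F[X] :=
  ∏ i, if e i then g i else 1

theorem genPow_nonneg {s : ℕ} {g : Fin s → F[X]} {K : Set ℝ}
    (hg : ∀ i, ∀ x ∈ K, 0 ≤ pev F (g i) x) (e : Fin s → Bool) {x : ℝ} (hx : x ∈ K) :
    0 ≤ pev F (genPow g e) x := by
  simp only [genPow, pev, map_prod]
  refine Finset.prod_nonneg fun i _ => ?_
  split
  · exact hg i x hx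
  · simp

theorem InPre.neg_mul_le_pev {s : ℕ} {g : Fin s → F[X]} {f : F[X]} {K : Set ℝ} {a c : ℝ}
    (hf : InPre F g f) (hf2 : f.natDegree ≤ 2) (hray : Set.Ici a ⊆ K) (hcK : c ∈ K)
    (hg : ∀ i, ∀ x ∈ K, 0 ≤ pev F (g i) x)
    (hdeg : ∀ p : F[X], p ≠ 0 → pev F p c = 0 → 3 ≤ p.natDegree) (m : ℝ) :
    -((∑ e, |pev F (genPow g e) m| / pev F (genPow g e) c) * pev F f c) ≤ pev F f m := by
  obtain ⟨σ, hσ, hfσ⟩ := hf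
  have hinj := (algebraMap F ℝ).injective
  simp only [pev_eq_eval]
  refine neg_mul_le_eval_of_eq_sum (σ := fun e => (σ e).map (algebraMap F ℝ))
    (G := fun e => (genPow g e).map (algebraMap F ℝ)) hray hcK
    (fun e x => by simpa only [pev_eq_eval] using (hσ e).pev_nonneg_s9 x)
    (fun e x hx => by simpa only [pev_eq_eval] using genPow_nonneg hg e hx)
    (fun e hne hc => ?_) (by rwa [natDegree_map_eq_of_injective hinj]) ?_ m
  · rw [natDegree_map_eq_of_injective hinj]
    exact hdeg _ ((Polynomial.map_ne_zero_iff hinj).mp hne) (by rwa [pev_eq_eval])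
  · simp [hfσ, Polynomial.map_sum, genPow]

end Preordering

theorem stmt9_general (F : Subfield ℝ) (K : Set ℝ)
    (hbasic : ∃ (s : ℕ) (S : Fin s → F[X]), K = {x : ℝ | ∀ i, 0 ≤ pev F (S i) x})
    (a : F) (hray : Set.Ici (a:ℝ) ⊆ K)
    (c : ℝ) (hc : c ∈ frontier K)
    (hdeg : ∀ p : F[X], p ≠ 0 → pev F p c = 0 → 3 ≤ p.natDegree) :
    ¬ ∃ (s : ℕ) (g : Fin s → F[X]),
      (∀ i, ∀ x ∈ K, 0 ≤ pev F (g i) x) ∧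
      (∀ f : F[X], (∀ x ∈ K, 0 ≤ pev F f x) → InPre F g f) := by
  rintro ⟨s, g, hg, hpos⟩
  obtain ⟨k, S, hK⟩ := hbasic
  simp only [pev_eq_eval] at hK
  subst hK
  have hcK := (isClosed_setOf_forall_eval_nonneg _).frontier_subset hc
  obtain ⟨r, hrc, hgap⟩ := exists_rat_disjoint_uIoo_of_mem_frontier hc
  set m := ((r : ℝ) + c) / 2
  set B := ∑ e, |pev F (genPow g e) m| / pev F (genPow g e) c
  have hφc : (m - r) * (m - c) + B * ((c - r) * (c - c)) < 0 := by
    have : 0 < ((r : ℝ) - c) ^ 2 := by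
      have := sub_ne_zero.mpr hrc
      positivity
    simp only [m, sub_self, mul_zero, add_zero]
    nlinarith
  obtain ⟨q, hq, hφq⟩ := exists_rat_mem_uIoo_of_continuousAt
    (φ := fun y => (m - r) * (m - y) + B * ((c - r) * (c - y))) (by fun_prop) hφc hrc
  have hpev : ∀ x, pev F ((X - C (r : F)) * (X - C (q : F))) x = (x - r) * (x - q) := by
    intro x
    simp [pev]
  have hf := hpos ((X - C (r : F)) * (X - C (q : F))) fun x hx => by
    rw [hpev]
    exact mul_sub_nonneg_of_notMem_uIoo fun hxq => hgap.notMem_of_mem_left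
      (Set.uIoo_subset_Ioo Set.left_mem_uIcc (Set.uIoo_subset_uIcc_self hq) hxq) hx
  have hbound := hf.neg_mul_le_pev (natDegree_mul_le.trans (by simp)) hray hcK hg hdeg m
  rw [hpev, hpev] at hbound
  linarith

theorem stmt9 (F : Subfield ℝ) (K : Set ℝ)
    (hbasic : ∃ (s : ℕ) (S : Fin s → F[X]), K = {x : ℝ | ∀ i, 0 ≤ pev F (S i) x})
    (hnc : ¬ IsCompact K)
    (a : F) (hray : Set.Ici (a:ℝ) ⊆ K)
    (c : ℝ) (hc : c ∈ frontier K)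
    (halg : ∃ p : F[X], p ≠ 0 ∧ pev F p c = 0)
    (hdeg : ∀ p : F[X], p ≠ 0 → pev F p c = 0 → 3 ≤ p.natDegree) :
    ¬ ∃ (s : ℕ) (g : Fin s → F[X]),
      (∀ i, ∀ x ∈ K, 0 ≤ pev F (g i) x) ∧
      (∀ f : F[X], (∀ x ∈ K, 0 ≤ pev F f x) → InPre F g f) :=
  stmt9_general F K hbasic a hray c hc hdeg
end

section
/- Let C = ⋂_{n≥0} C_n be the middle-thirds Cantor set, where C₀ = [0,1] and C_{n+1} is obtained by removing open middle thirds. If f ∈ ℚ[x] satisfies f(x) ≥ 0 for all x ∈ C, then there exists n such that f(x) ≥ 0 for all x ∈ C_n. -/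
open Polynomial

/-- the `n`-th stage of the middle-thirds Cantor set construction. -/
noncomputable def cantorStage : ℕ → Set ℝ
  | 0 => Set.Icc 0 1
  | n + 1 => (fun x => x / 3) '' cantorStage n ∪ (fun x => x / 3 + 2 / 3) '' cantorStage n

lemma cantorStage_zero_mem (n : ℕ) : (0:ℝ) ∈ cantorStage n := by
  induction n with
  | zero => simp [cantorStage]
  | succ n ih => exact Or.inl ⟨0, ih, by norm_num⟩

lemma cantorStage_one_mem (n : ℕ) : (1:ℝ) ∈ cantorStage n := by
  induction n with
  | zero => simp [cantorStage]
  | succ n ih => exact Or.inr ⟨1, ih, by norm_num⟩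

lemma cantor_selfmap_left {z : ℝ} (hz : ∀ n, z ∈ cantorStage n) :
    ∀ n, z / 3 ∈ cantorStage n := by
  intro n
  cases n with
  | zero =>
    have h := hz 0
    simp only [cantorStage, Set.mem_Icc] at h ⊢
    constructor <;> linarith [h.1, h.2]
  | succ n => exact Or.inl ⟨z, hz n, rfl⟩

lemma cantor_selfmap_right {z : ℝ} (hz : ∀ n, z ∈ cantorStage n) :
    ∀ n, z / 3 + 2/3 ∈ cantorStage n := by
  intro n
  cases n with
  | zero =>
    have h := hz 0
    simp only [cantorStage, Set.mem_Icc] at h ⊢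
    constructor <;> linarith [h.1, h.2]
  | succ n => exact Or.inr ⟨z, hz n, rfl⟩

lemma cantor_sandwich : ∀ n, ∀ y ∈ cantorStage n,
    ∃ z1 z2 : ℝ, (∀ m, z1 ∈ cantorStage m) ∧ (∀ m, z2 ∈ cantorStage m) ∧
      z1 ≤ y ∧ y ≤ z2 ∧ z2 - z1 ≤ (1/3 : ℝ) ^ n := by
  intro n
  induction n with
  | zero =>
    intro y hy
    exact ⟨0, 1, cantorStage_zero_mem, cantorStage_one_mem, hy.1, hy.2, by norm_num⟩
  | succ n ih =>
    rintro y (⟨w, hw, rfl⟩ | ⟨w, hw, rfl⟩)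
    · obtain ⟨z1, z2, h1, h2, hle, hge, hd⟩ := ih w hw
      exact ⟨z1/3, z2/3, cantor_selfmap_left h1, cantor_selfmap_left h2,
        by dsimp only; linarith, by dsimp only; linarith, by rw [pow_succ]; linarith⟩
    · obtain ⟨z1, z2, h1, h2, hle, hge, hd⟩ := ih w hw
      exact ⟨z1/3 + 2/3, z2/3 + 2/3, cantor_selfmap_right h1, cantor_selfmap_right h2,
        by dsimp only; linarith, by dsimp only; linarith, by rw [pow_succ]; linarith⟩

theorem stmt10 (f : ℚ[X])
    (hf : ∀ x ∈ ⋂ n, cantorStage n, 0 ≤ Polynomial.aeval x f) :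
    ∃ n, ∀ x ∈ cantorStage n, 0 ≤ Polynomial.aeval x f := by
  by_cases hf0 : f = 0
  · exact ⟨0, fun x _ => by simp [hf0]⟩
  set g : ℝ[X] := f.map (algebraMap ℚ ℝ) with hg
  have hg0 : g ≠ 0 := by
    simpa [hg, Polynomial.map_eq_zero_iff (algebraMap ℚ ℝ).injective] using hf0
  have haeval : ∀ x : ℝ, Polynomial.aeval x f = g.eval x := fun x => by
    rw [hg, Polynomial.eval_map, Polynomial.aeval_def]
  -- a positive lower bound on gaps between distinct roots of g
  have hgap : ∃ ε : ℝ, 0 < ε ∧ ∀ a ∈ g.roots.toFinset, ∀ b ∈ g.roots.toFinset,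
      a ≠ b → ε ≤ |a - b| := by
    by_cases hD : (g.roots.toFinset.offDiag).Nonempty
    · obtain ⟨p, hp, hmin⟩ := Finset.exists_min_image _ (fun p => |p.1 - p.2|) hD
      refine ⟨|p.1 - p.2|, ?_, fun a ha b hb hab =>
        hmin (a, b) (Finset.mem_offDiag.2 ⟨ha, hb, hab⟩)⟩
      exact abs_pos.2 (sub_ne_zero.2 (Finset.mem_offDiag.1 hp).2.2)
    · exact ⟨1, one_pos, fun a ha b hb hab =>
        absurd ⟨(a, b), Finset.mem_offDiag.2 ⟨ha, hb, hab⟩⟩ hD⟩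
  obtain ⟨ε, hε, hmin⟩ := hgap
  obtain ⟨n, hn⟩ := exists_pow_lt_of_lt_one hε (by norm_num : (1/3:ℝ) < 1)
  refine ⟨n, fun x hx => ?_⟩
  by_contra hneg
  push_neg at hneg
  rw [haeval] at hneg
  obtain ⟨z1, z2, h1, h2, hz1x, hxz2, hd⟩ := cantor_sandwich n x hx
  have hgz1 : 0 ≤ g.eval z1 := by rw [← haeval]; exact hf z1 (Set.mem_iInter.2 h1)
  have hgz2 : 0 ≤ g.eval z2 := by rw [← haeval]; exact hf z2 (Set.mem_iInter.2 h2)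
  obtain ⟨r1, hr1mem, hr1⟩ :=
    intermediate_value_Icc' hz1x g.continuous.continuousOn ⟨hneg.le, hgz1⟩
  obtain ⟨r2, hr2mem, hr2⟩ :=
    intermediate_value_Icc hxz2 g.continuous.continuousOn ⟨hneg.le, hgz2⟩
  have hr1x : r1 < x := lt_of_le_of_ne hr1mem.2 (by rintro rfl; exact absurd hr1 hneg.ne)
  have hxr2 : x < r2 := lt_of_le_of_ne hr2mem.1 (by rintro rfl; exact absurd hr2 hneg.ne)
  have hr1S : r1 ∈ g.roots.toFinset :=
    Multiset.mem_toFinset.2 ((Polynomial.mem_roots'.2 ⟨hg0, hr1⟩))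
  have hr2S : r2 ∈ g.roots.toFinset :=
    Multiset.mem_toFinset.2 ((Polynomial.mem_roots'.2 ⟨hg0, hr2⟩))
  have hne : r1 ≠ r2 := ne_of_lt (hr1x.trans hxr2)
  have habs : |r1 - r2| = r2 - r1 := by
    rw [abs_sub_comm, abs_of_nonneg (by linarith)]
  have := hmin r1 hr1S r2 hr2S hne
  have h1z : z1 ≤ r1 := hr1mem.1
  have h2z : r2 ≤ z2 := hr2mem.2
  linarith [habs ▸ this]
end

section
/- Let S = {x, −x²} ⊂ ℚ[x], so K_S = {0}. Then the polynomial −x does not belong to the preordering T_S of ℚ[x] generated by S (finite sums ∑_{e∈{0,1}²} σ_e x^{e₁}(−x²)^{e₂} with σ_e ∈ ∑ ℚ_{≥0} ℚ[x]²), even though −x ≥ 0 on K_S. -/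
/-!
Comparing constant terms in `-x = σ₀ + σ₁ x - σ₂ x² - σ₃ x³` gives `σ₀(0) = 0`, and comparing linear
terms gives `-1 = σ₀'(0) + σ₁(0)`. A weighted sum of squares vanishing at `0` has a double zero
there, so `σ₀'(0) = 0`, while `σ₁(0) ≥ 0`: a contradiction.
-/

open Polynomial

/-- `σ` is a finite sum of terms `t·g²` with `t ∈ ℚ`, `t ≥ 0`, `g ∈ ℚ[x]`. -/
def SumWtSqQ (σ : ℚ[X]) : Prop :=
  ∃ (n : ℕ) (t : Fin n → ℚ) (g : Fin n → ℚ[X]),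
    (∀ i, 0 ≤ t i) ∧ σ = ∑ i, C (t i) * g i ^ 2

namespace Polynomial

variable {R : Type*} [CommRing R] [LinearOrder R] [IsStrictOrderedRing R]

variable (R) in
/-- The polynomials whose first-order jet at `0` is that of a function with a nonnegative
local minimum at `0`. -/
def nonnegJetAtZero : AddSubmonoid R[X] where
  carrier := {p | 0 ≤ p.coeff 0 ∧ (p.coeff 0 = 0 → p.coeff 1 = 0)}
  zero_mem' := by simp
  add_mem' := by
    rintro p q ⟨hp, hp'⟩ ⟨hq, hq'⟩
    refine ⟨by simpa using add_nonneg hp hq, fun h => ?_⟩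
    rw [coeff_add] at h ⊢
    rw [hp' (by linarith), hq' (by linarith), add_zero]

theorem C_mul_sq_mem_nonnegJetAtZero {t : R} (ht : 0 ≤ t) (g : R[X]) :
    C t * g ^ 2 ∈ nonnegJetAtZero R := by
  refine ⟨by simpa [sq] using mul_nonneg ht (mul_self_nonneg (g.coeff 0)), fun h => ?_⟩
  rw [coeff_C_mul, sq, mul_coeff_one]
  rw [coeff_C_mul, sq, mul_coeff_zero, ← sq, mul_eq_zero, sq_eq_zero_iff] at h
  rcases h with h | h <;> simp [h]

end Polynomial

theorem SumWtSqQ.mem_nonnegJetAtZero {σ : ℚ[X]} (h : SumWtSqQ σ) : σ ∈ nonnegJetAtZero ℚ := by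
  obtain ⟨n, t, g, ht, rfl⟩ := h
  exact AddSubmonoid.sum_mem _ fun i _ => C_mul_sq_mem_nonnegJetAtZero (ht i) (g i)

theorem stmt14 :
    (∀ x : ℝ, (0 ≤ Polynomial.aeval x (X : ℚ[X]) ∧ 0 ≤ Polynomial.aeval x (-X ^ 2 : ℚ[X])) →
      0 ≤ Polynomial.aeval x (-X : ℚ[X])) ∧
    ¬ ∃ σ₀ σ₁ σ₂ σ₃ : ℚ[X], SumWtSqQ σ₀ ∧ SumWtSqQ σ₁ ∧ SumWtSqQ σ₂ ∧ SumWtSqQ σ₃ ∧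
      (-X : ℚ[X]) = σ₀ + σ₁ * X + σ₂ * (-X ^ 2) + σ₃ * (X * (-X ^ 2)) := by
  constructor
  · rintro x ⟨hx, hx2⟩
    simp only [map_neg, map_pow, aeval_X] at hx hx2 ⊢
    nlinarith
  · rintro ⟨σ₀, σ₁, σ₂, σ₃, h₀, h₁, -, -, heq⟩
    have heq' : (-X : ℚ[X]) = σ₀ + X * (σ₁ - X * σ₂ - X ^ 2 * σ₃) := by
      linear_combination heq
    have hcoeff0 : σ₀.coeff 0 = 0 := by
      simpa using (congrArg (coeff · 0) heq').symm
    have hcoeff1 : -1 = σ₀.coeff 1 + σ₁.coeff 0 := by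
      simpa [coeff_X_mul, mul_comm X] using congrArg (coeff · 1) heq'
    have hσ₀ : σ₀.coeff 1 = 0 := h₀.mem_nonnegJetAtZero.2 hcoeff0
    have hσ₁ : 0 ≤ σ₁.coeff 0 := h₁.mem_nonnegJetAtZero.1
    linarith
end
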